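/- arXiv:2207.04334 — 10 statements merged into one kernel-verified Lean document; each statement's English description precedes it below -/
import Mathlib

section
/- Let V be a real n×m matrix such that 0 lies in the interior of the convex hull of the columns of V. Then for every x ∈ ℝⁿ the subdifferential of the polyhedral gauge ψ_V at x equals the set {h ∈ ℝⁿ : hᵀx = ψ_V(x) and hᵀV ≤ 1ᵀ componentwise}, where the subdifferential of ψ_V at x is the set of all h ∈ ℝⁿ such that ψ_V(v) − ψ_V(x) ≥ hᵀ(v − x) for every v ∈ ℝⁿ. -/
open Matrix

/-- Polyhedral gauge `ψ_V(x) = inf {1ᵀp : p ≥ 0, Vp = x}`. -/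
noncomputable def psiV {n : ℕ} {m : Type*} [Fintype m]
    (V : Matrix (Fin n) m ℝ) (x : Fin n → ℝ) : ℝ :=
  sInf {s : ℝ | ∃ p : m → ℝ, (∀ j, 0 ≤ p j) ∧ V.mulVec p = x ∧ s = ∑ j, p j}

/-- `0` lies in the interior of the convex hull of the columns of `V`. -/
def ZeroInInterior {n : ℕ} {m : Type*} [Fintype m]
    (V : Matrix (Fin n) m ℝ) : Prop :=
  (0 : Fin n → ℝ) ∈ interior (convexHull ℝ (Set.range fun j i => V i j))

namespace PsiVAux

variable {n m : ℕ} (V : Matrix (Fin n) (Fin m) ℝ)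

/-- Feasible value set. -/
def Feas (x : Fin n → ℝ) : Set ℝ :=
  {s : ℝ | ∃ p : Fin m → ℝ, (∀ j, 0 ≤ p j) ∧ V.mulVec p = x ∧ s = ∑ j, p j}

lemma psiV_eq (x : Fin n → ℝ) : psiV V x = sInf (Feas V x) := rfl

lemma feas_bddBelow (x : Fin n → ℝ) : BddBelow (Feas V x) := by
  refine ⟨0, ?_⟩
  rintro s ⟨p, hp, -, rfl⟩
  exact Finset.sum_nonneg fun j _ => hp j

lemma feas_nonempty (hV : ZeroInInterior V) (x : Fin n → ℝ) :
    (Feas V x).Nonempty := by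
  have hmem : ∀ y : Fin n → ℝ, y ∈ convexHull ℝ (Set.range fun j i => V i j) →
      ∃ p : Fin m → ℝ, (∀ j, 0 ≤ p j) ∧ V.mulVec p = y := by
    intro y hy
    rw [convexHull_range_eq_exists_affineCombination] at hy
    obtain ⟨s, w, hw0, hw1, hwy⟩ := hy
    refine ⟨fun j => if j ∈ s then w j else 0,
      fun j => by by_cases hj : j ∈ s <;> simp [hj]; exact hw0 j hj, ?_⟩
    have := Finset.affineCombination_eq_linear_combination s (fun j i => V i j) w hw1
    rw [this] at hwy
    funext i
    rw [← hwy]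
    simp only [mulVec, dotProduct]
    rw [Finset.sum_apply]
    rw [← Finset.sum_subset (Finset.subset_univ s)
      (fun j _ hj => by simp [hj])]
    refine Finset.sum_congr rfl fun j hj => by simp [hj, mul_comm]
  rcases eq_or_ne x 0 with rfl | hx
  · exact ⟨∑ j : Fin m, (0 : ℝ), 0, fun j => le_rfl, by simp [mulVec, dotProduct], rfl⟩
  · obtain ⟨ε, hε, hball⟩ := Metric.mem_nhds_iff.mp (mem_interior_iff_mem_nhds.mp hV)
    have hxn : (0 : ℝ) < ‖x‖ := norm_pos_iff.mpr hx
    set c : ℝ := ε / (2 * ‖x‖) with hc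
    have hcpos : 0 < c := by positivity
    have hce : c * ‖x‖ = ε / 2 := by
      rw [hc]; field_simp
    have hmemball : c • x ∈ Metric.ball (0 : Fin n → ℝ) ε := by
      rw [Metric.mem_ball, dist_zero_right, norm_smul, Real.norm_eq_abs,
        abs_of_pos hcpos, hce]
      linarith
    obtain ⟨p, hp0, hp⟩ := hmem _ (hball hmemball)
    refine ⟨∑ j, c⁻¹ * p j, fun j => c⁻¹ * p j, fun j => mul_nonneg (inv_nonneg.mpr hcpos.le) (hp0 j), ?_, rfl⟩
    have : V.mulVec (fun j => c⁻¹ * p j) = c⁻¹ • V.mulVec p := by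
      funext i
      simp only [mulVec, dotProduct, Pi.smul_apply, smul_eq_mul, Finset.mul_sum]
      exact Finset.sum_congr rfl fun j _ => by ring
    rw [this, hp, smul_smul, inv_mul_cancel₀ (ne_of_gt hcpos), one_smul]

lemma dot_le_psiV (hV : ZeroInInterior V) (h : Fin n → ℝ)
    (hcol : ∀ j, (∑ i, h i * V i j) ≤ 1) (v : Fin n → ℝ) :
    h ⬝ᵥ v ≤ psiV V v := by
  refine le_csInf (feas_nonempty V hV v) ?_
  rintro s ⟨p, hp0, hp, rfl⟩
  have : h ⬝ᵥ v = ∑ j, p j * (∑ i, h i * V i j) := by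
    rw [← hp]
    simp only [dotProduct, mulVec, dotProduct, Finset.mul_sum, Finset.sum_mul]
    rw [Finset.sum_comm]
    exact Finset.sum_congr rfl fun j _ => Finset.sum_congr rfl fun i _ => by ring
  rw [this]
  calc ∑ j, p j * (∑ i, h i * V i j) ≤ ∑ j, p j * 1 :=
        Finset.sum_le_sum fun j _ => mul_le_mul_of_nonneg_left (hcol j) (hp0 j)
    _ = ∑ j, p j := by simp

lemma psiV_col_le_one (j : Fin m) : psiV V (fun i => V i j) ≤ 1 := by
  refine csInf_le (feas_bddBelow V _) ?_
  refine ⟨Pi.single j 1, fun k => by rw [Pi.single_apply]; split <;> norm_num, ?_, by simp⟩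
  funext i
  simp [mulVec, dotProduct, Pi.single_apply, mul_comm]

lemma psiV_zero : psiV V 0 = 0 := by
  apply le_antisymm
  · refine csInf_le (feas_bddBelow V _) ⟨0, fun j => le_rfl, ?_, by simp⟩
    simp [mulVec, dotProduct]
  · refine le_csInf ⟨0, 0, fun j => le_rfl, by simp [mulVec, dotProduct], by simp⟩ ?_
    rintro s ⟨p, hp0, -, rfl⟩
    exact Finset.sum_nonneg fun j _ => hp0 j

lemma psiV_add_le (hV : ZeroInInterior V) (x y : Fin n → ℝ) :
    psiV V (x + y) ≤ psiV V x + psiV V y := by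
  rw [psiV_eq V x, psiV_eq V y]
  rw [← csInf_add (feas_nonempty V hV x) (feas_bddBelow V x)
    (feas_nonempty V hV y) (feas_bddBelow V y)]
  refine le_csInf ((feas_nonempty V hV x).add (feas_nonempty V hV y)) ?_
  rintro s ⟨a, ⟨p, hp0, hp, rfl⟩, b, ⟨q, hq0, hq, rfl⟩, rfl⟩
  refine csInf_le (feas_bddBelow V _) ⟨p + q, fun j => add_nonneg (hp0 j) (hq0 j), ?_, ?_⟩
  · rw [mulVec_add, hp, hq]
  · simp [Finset.sum_add_distrib]

end PsiVAux

open PsiVAux in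
/-- The subdifferential of the polyhedral gauge `ψ_V` at `x` equals
`{h : hᵀx = ψ_V(x), hᵀV ≤ 1ᵀ}`. -/
theorem subdiff_psiV {n m : ℕ} (V : Matrix (Fin n) (Fin m) ℝ)
    (hV : ZeroInInterior V) (x : Fin n → ℝ) :
    {h : Fin n → ℝ | ∀ v : Fin n → ℝ, psiV V v - psiV V x ≥ h ⬝ᵥ (v - x)} =
    {h : Fin n → ℝ | h ⬝ᵥ x = psiV V x ∧ ∀ j, (∑ i, h i * V i j) ≤ 1} := by
  ext h
  simp only [Set.mem_setOf_eq]
  constructor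
  · intro hsub
    have hcol : ∀ j, (∑ i, h i * V i j) ≤ 1 := by
      intro j
      have h1 := hsub (x + fun i => V i j)
      have h2 : psiV V (x + fun i => V i j) ≤ psiV V x + 1 :=
        le_trans (psiV_add_le V hV x _)
          (by linarith [psiV_col_le_one V j])
      have h3 : h ⬝ᵥ ((x + fun i => V i j) - x) = ∑ i, h i * V i j := by
        simp [dotProduct]
      rw [h3] at h1
      linarith
    refine ⟨le_antisymm ?_ ?_, hcol⟩
    · exact dot_le_psiV V hV h hcol x
    · have h0 := hsub 0
      rw [psiV_zero V] at h0
      have : h ⬝ᵥ (0 - x) = -(h ⬝ᵥ x) := by simp [dotProduct, Finset.sum_neg_distrib]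
      rw [this] at h0
      linarith
  · rintro ⟨hx, hcol⟩ v
    have h1 : h ⬝ᵥ v ≤ psiV V v := dot_le_psiV V hV h hcol v
    have h2 : h ⬝ᵥ (v - x) = h ⬝ᵥ v - h ⬝ᵥ x := by
      simp [dotProduct, mul_sub, Finset.sum_sub_distrib]
    rw [h2, hx]
    linarith
end

section
/- Let V be a real n×m matrix such that 0 lies in the interior of the convex hull of the columns of V. Then for every x ∈ ℝⁿ, the polyhedral gauge satisfies strong linear-programming duality: ψ_V(x) = min{1ᵀp : p ∈ ℝᵐ, p ≥ 0, V p = x} = max{hᵀx : h ∈ ℝⁿ, hᵀV ≤ 1ᵀ componentwise}, and both the minimum and the maximum are attained. -/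
open Matrix Finset

namespace PsiVAux

variable {n m : ℕ} (V : Matrix (Fin n) (Fin m) ℝ)

noncomputable def Lmap : (Fin m → ℝ) →ₗ[ℝ] EuclideanSpace ℝ (Fin (n+1)) where
  toFun p := WithLp.toLp 2 (Fin.snoc (V.mulVec p) (∑ j, p j))
  map_add' p q := by
    ext i
    refine Fin.lastCases ?_ ?_ i <;>
      simp [Fin.snoc_last, Fin.snoc_castSucc, Matrix.mulVec_add, Finset.sum_add_distrib]
  map_smul' c p := by
    ext i
    refine Fin.lastCases ?_ ?_ i <;>
      simp [Fin.snoc_last, Fin.snoc_castSucc, Matrix.mulVec_smul, Finset.mul_sum]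

lemma Lmap_apply (p : Fin m → ℝ) :
    Lmap V p = WithLp.toLp 2 (Fin.snoc (V.mulVec p) (∑ j, p j)) := rfl

def Cset : Set (EuclideanSpace ℝ (Fin (n+1))) :=
  {z | ∃ p : Fin m → ℝ, (∀ j, 0 ≤ p j) ∧ Lmap V p = z}

noncomputable def Ccone : ConvexCone ℝ (EuclideanSpace ℝ (Fin (n+1))) where
  carrier := Cset V
  smul_mem' := by
    rintro c hc z ⟨p, hp, rfl⟩
    exact ⟨c • p, fun j => mul_nonneg hc.le (hp j), (Lmap V).map_smul c p⟩
  add_mem' := by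
    rintro z ⟨p, hp, rfl⟩ w ⟨q, hq, rfl⟩
    exact ⟨p + q, fun j => add_nonneg (hp j) (hq j), (Lmap V).map_add p q⟩

lemma isClosed_Cset : IsClosed (Cset V) := by
  apply isClosed_of_closure_subset
  intro z hz
  set s₀ : ℝ := z (Fin.last n) with hs₀
  set K : Set (Fin m → ℝ) := {p | (∀ j, 0 ≤ p j) ∧ ∑ j, p j ≤ s₀ + 1} with hK
  have hKclosed : IsClosed K := by
    have h1 : IsClosed {p : Fin m → ℝ | ∀ j, 0 ≤ p j} := by
      have : {p : Fin m → ℝ | ∀ j, 0 ≤ p j} = ⋂ j, {p | 0 ≤ p j} := by ext; simp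
      rw [this]
      exact isClosed_iInter fun j => isClosed_le continuous_const (continuous_apply j)
    have h2 : IsClosed {p : Fin m → ℝ | ∑ j, p j ≤ s₀ + 1} :=
      isClosed_le (continuous_finset_sum _ fun j _ => continuous_apply j) continuous_const
    exact h1.inter h2
  have hKcompact : IsCompact K := by
    refine IsCompact.of_isClosed_subset (isCompact_closedBall (0 : Fin m → ℝ) (|s₀ + 1|))
      hKclosed ?_
    rintro p ⟨hp, hps⟩
    rw [Metric.mem_closedBall, dist_zero_right]
    rw [pi_norm_le_iff_of_nonneg (abs_nonneg _)]
    intro j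
    rw [Real.norm_eq_abs, abs_of_nonneg (hp j)]
    calc p j ≤ ∑ k, p k := Finset.single_le_sum (fun k _ => hp k) (Finset.mem_univ j)
    _ ≤ s₀ + 1 := hps
    _ ≤ |s₀ + 1| := le_abs_self _
  have himg : IsCompact (Lmap V '' K) := hKcompact.image (Lmap V).continuous_of_finiteDimensional
  have hsub : Cset V ∩ Metric.ball z 1 ⊆ Lmap V '' K := by
    rintro w ⟨⟨p, hp, rfl⟩, hw⟩
    refine ⟨p, ⟨hp, ?_⟩, rfl⟩
    have hcoord : |Lmap V p (Fin.last n) - z (Fin.last n)| ≤ dist (Lmap V p) z := by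
      rw [EuclideanSpace.dist_eq]
      have h1 : |Lmap V p (Fin.last n) - z (Fin.last n)|
          = Real.sqrt (dist (Lmap V p (Fin.last n)) (z (Fin.last n)) ^ 2) := by
        rw [Real.sqrt_sq_eq_abs, Real.dist_eq, abs_abs]
      rw [h1]
      apply Real.sqrt_le_sqrt
      exact Finset.single_le_sum (f := fun i => dist (Lmap V p i) (z i) ^ 2)
        (fun i _ => sq_nonneg _) (Finset.mem_univ (Fin.last n))
    have hlast : Lmap V p (Fin.last n) = ∑ j, p j := by
      simp [Lmap_apply, Fin.snoc_last]
    rw [Metric.mem_ball] at hw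
    have := hcoord.trans_lt hw
    rw [hlast] at this
    have := (abs_lt.mp this).2
    linarith
  have hz1 : z ∈ closure (Cset V ∩ Metric.ball z 1) := by
    rw [mem_closure_iff_nhds] at hz ⊢
    intro t ht
    obtain ⟨w, hw1, hw2⟩ := hz (t ∩ Metric.ball z 1)
      (Filter.inter_mem ht (Metric.ball_mem_nhds z one_pos))
    exact ⟨w, hw1.1, hw2, hw1.2⟩
  have : z ∈ Lmap V '' K := himg.isClosed.closure_subset
    ((closure_mono hsub) hz1)
  obtain ⟨p, hpK, hpz⟩ := this
  exact ⟨p, hpK.1, hpz⟩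

noncomputable def PCone : ProperCone ℝ (EuclideanSpace ℝ (Fin (n+1))) where
  carrier := Cset V
  add_mem' := by
    rintro z w ⟨p, hp, rfl⟩ ⟨q, hq, rfl⟩
    exact ⟨p + q, fun j => add_nonneg (hp j) (hq j), (Lmap V).map_add p q⟩
  zero_mem' := ⟨0, fun j => le_refl 0, (Lmap V).map_zero⟩
  smul_mem' := by
    rintro c z ⟨p, hp, rfl⟩
    exact ⟨(c : ℝ) • p, fun j => mul_nonneg c.2 (hp j), (Lmap V).map_smul (c : ℝ) p⟩
  isClosed' := isClosed_Cset V

lemma exists_hull_weights {x : Fin n → ℝ}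
    (hx : x ∈ convexHull ℝ (Set.range fun j i => V i j)) :
    ∃ w : Fin m → ℝ, (∀ j, 0 ≤ w j) ∧ ∑ j, w j = 1 ∧ V.mulVec w = x := by
  classical
  rw [convexHull_range_eq_exists_affineCombination] at hx
  obtain ⟨s, w, hw0, hw1, haff⟩ := hx
  rw [Finset.affineCombination_eq_linear_combination s _ w hw1] at haff
  refine ⟨fun j => if j ∈ s then w j else 0, fun j => ?_, ?_, ?_⟩
  · by_cases hj : j ∈ s <;> simp [hj, hw0 j]
  · rw [← hw1]
    rw [Finset.sum_ite_mem, Finset.univ_inter]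
  · funext i
    have := congrFun haff i
    rw [Finset.sum_apply] at this
    simp only [Matrix.mulVec, dotProduct]
    rw [← this]
    rw [show (∑ j, V i j * if j ∈ s then w j else 0) = ∑ j ∈ s, V i j * w j by
      rw [← Finset.sum_subset (Finset.subset_univ s)
        (fun j _ hj => by simp [hj] : ∀ j ∈ Finset.univ, j ∉ s →
          (V i j * if j ∈ s then w j else 0) = 0)]
      exact Finset.sum_congr rfl fun j hj => by simp [hj]]
    exact Finset.sum_congr rfl fun j hj => by simp [Pi.smul_apply]; ring

lemma sum_mul_mulVec (h : Fin n → ℝ) (p : Fin m → ℝ) :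
    ∑ i, h i * V.mulVec p i = ∑ j, p j * ∑ i, h i * V i j := by
  simp only [Matrix.mulVec, dotProduct, Finset.mul_sum]
  rw [Finset.sum_comm]
  exact Finset.sum_congr rfl fun j _ => Finset.sum_congr rfl fun i _ => by ring

lemma inner_Lmap (p : Fin m → ℝ) (y : EuclideanSpace ℝ (Fin (n+1))) :
    (inner ℝ (Lmap V p) y : ℝ)
      = ∑ i, V.mulVec p i * y (Fin.castSucc i) + (∑ j, p j) * y (Fin.last n) := by
  rw [PiLp.inner_apply]
  simp only [RCLike.inner_apply, starRingEnd_apply, star_trivial]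
  rw [Fin.sum_univ_castSucc]
  simp [Lmap_apply, Fin.snoc_castSucc, Fin.snoc_last]
  simp only [mul_comm]

lemma inner_snoc (y : EuclideanSpace ℝ (Fin (n+1))) (v : Fin n → ℝ) (c : ℝ) :
    (inner ℝ y (WithLp.toLp 2 (Fin.snoc v c : Fin (n+1) → ℝ) : EuclideanSpace ℝ (Fin (n+1))) : ℝ)
      = ∑ i, y (Fin.castSucc i) * v i + y (Fin.last n) * c := by
  rw [PiLp.inner_apply]
  simp only [RCLike.inner_apply, starRingEnd_apply, star_trivial]
  rw [Fin.sum_univ_castSucc]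
  simp [Fin.snoc_castSucc, Fin.snoc_last]
  simp only [mul_comm]

lemma continuous_snoc (x : Fin n → ℝ) :
    Continuous (fun s : ℝ => (WithLp.toLp 2 (Fin.snoc x s : Fin (n+1) → ℝ) : EuclideanSpace ℝ (Fin (n+1)))) := by
  have hg : Continuous (fun s : ℝ => (Fin.snoc x s : Fin (n+1) → ℝ)) := by
    apply continuous_pi
    intro i
    refine Fin.lastCases ?_ (fun i => ?_) i
    · simpa [Fin.snoc_last] using continuous_id'
    · simpa [Fin.snoc_castSucc] using (continuous_const : Continuous fun _ : ℝ => x i)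
  exact (EuclideanSpace.equiv (Fin (n+1)) ℝ).symm.continuous.comp hg

/-- Lmap_eq_iff -/
lemma Lmap_eq_iff (p : Fin m → ℝ) (y : Fin n → ℝ) (s : ℝ) :
    Lmap V p = WithLp.toLp 2 (Fin.snoc y s) ↔ V.mulVec p = y ∧ ∑ j, p j = s := by
  constructor
  · intro h
    constructor
    · funext i
      have := congrFun (congrArg WithLp.ofLp h) (Fin.castSucc i)
      simpa [Lmap_apply, Fin.snoc_castSucc] using this
    · have := congrFun (congrArg WithLp.ofLp h) (Fin.last n)
      simpa [Lmap_apply, Fin.snoc_last] using this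
  · rintro ⟨h1, h2⟩
    rw [Lmap_apply, h1, h2]

end PsiVAux

open PsiVAux

/-- Strong LP duality for the polyhedral gauge:
`ψ_V(x) = min {1ᵀp : p ≥ 0, Vp = x} = max {hᵀx : hᵀV ≤ 1ᵀ}`,
with both optima attained. -/
theorem psiV_duality {n m : ℕ} (V : Matrix (Fin n) (Fin m) ℝ)
    (hV : ZeroInInterior V) (x : Fin n → ℝ) :
    IsLeast {s : ℝ | ∃ p : Fin m → ℝ, (∀ j, 0 ≤ p j) ∧ V.mulVec p = x ∧ s = ∑ j, p j}
      (psiV V x) ∧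
    IsGreatest {s : ℝ | ∃ h : Fin n → ℝ, (∀ j, (∑ i, h i * V i j) ≤ 1) ∧ s = h ⬝ᵥ x}
      (psiV V x) := by
  classical
  set S := {s : ℝ | ∃ p : Fin m → ℝ, (∀ j, 0 ≤ p j) ∧ V.mulVec p = x ∧ s = ∑ j, p j} with hS
  have hVint : (0 : Fin n → ℝ) ∈ interior (convexHull ℝ (Set.range fun j i => V i j)) := hV
  obtain ⟨r, hr, hball⟩ : ∃ r > 0,
      Metric.ball (0 : Fin n → ℝ) r ⊆ convexHull ℝ (Set.range fun j i => V i j) := by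
    rcases Metric.mem_nhds_iff.mp (mem_interior_iff_mem_nhds.mp hVint) with ⟨r, hr, hsub⟩
    exact ⟨r, hr, hsub⟩
  -- primal feasibility
  have feas : ∀ y : Fin n → ℝ, ∃ p : Fin m → ℝ, (∀ j, 0 ≤ p j) ∧ V.mulVec p = y := by
    intro y
    have hc : 0 < r / (2 * (‖y‖ + 1)) := by positivity
    set c := r / (2 * (‖y‖ + 1)) with hcdef
    have hmem : c • y ∈ convexHull ℝ (Set.range fun j i => V i j) := by
      apply hball
      rw [Metric.mem_ball, dist_zero_right, norm_smul, Real.norm_eq_abs, abs_of_pos hc]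
      have hy : (0:ℝ) < ‖y‖ + 1 := by positivity
      have h2 : c * (‖y‖ + 1) = r / 2 := by
        rw [hcdef]; field_simp
      nlinarith [norm_nonneg y]
    obtain ⟨w, hw0, hw1, hwV⟩ := exists_hull_weights V hmem
    refine ⟨c⁻¹ • w, fun j => mul_nonneg (inv_nonneg.mpr hc.le) (hw0 j), ?_⟩
    rw [Matrix.mulVec_smul, hwV, smul_smul, inv_mul_cancel₀ hc.ne', one_smul]
  obtain ⟨q, hq0, hq1, hqV⟩ := exists_hull_weights V (interior_subset hVint)
  obtain ⟨p₀, hp₀, hVp₀⟩ := feas x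
  have hSne : S.Nonempty := ⟨∑ j, p₀ j, p₀, hp₀, hVp₀, rfl⟩
  have hSbdd : BddBelow S := by
    refine ⟨0, ?_⟩
    rintro s ⟨p, hp, -, rfl⟩
    exact Finset.sum_nonneg fun j _ => hp j
  have hSclosed : IsClosed S := by
    have hSeq : S = (fun s : ℝ => (WithLp.toLp 2 (Fin.snoc x s : Fin (n+1) → ℝ) : EuclideanSpace ℝ (Fin (n+1)))) ⁻¹' Cset V := by
      ext s
      constructor
      · rintro ⟨p, hp, hVp, rfl⟩
        exact ⟨p, hp, (Lmap_eq_iff V p x _).mpr ⟨hVp, rfl⟩⟩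
      · rintro ⟨p, hp, hLp⟩
        rw [Lmap_eq_iff] at hLp
        exact ⟨p, hp, hLp.1, hLp.2.symm⟩
    rw [hSeq]
    exact (isClosed_Cset V).preimage (continuous_snoc x)
  set μ := sInf S with hμ
  have hμS : μ ∈ S := hSclosed.csInf_mem hSne hSbdd
  have hleast : IsLeast S μ := ⟨hμS, fun s hs => csInf_le hSbdd hs⟩
  obtain ⟨pstar, hpstar, hVpstar, hμsum⟩ := hμS
  -- weak duality
  have weak : ∀ h : Fin n → ℝ, (∀ j, (∑ i, h i * V i j) ≤ 1) → h ⬝ᵥ x ≤ μ := by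
    intro h hh
    have hdx : h ⬝ᵥ x = ∑ j, pstar j * ∑ i, h i * V i j := by
      rw [dotProduct, ← hVpstar, sum_mul_mulVec]
    rw [hdx, hμsum]
    calc ∑ j, pstar j * ∑ i, h i * V i j ≤ ∑ j, pstar j * 1 :=
          Finset.sum_le_sum fun j _ => mul_le_mul_of_nonneg_left (hh j) (hpstar j)
      _ = ∑ j, pstar j := by simp
  -- the dual feasible set is compact
  set D := {h : Fin n → ℝ | ∀ j, (∑ i, h i * V i j) ≤ 1} with hD
  have hDclosed : IsClosed D := by
    have : D = ⋂ j, {h : Fin n → ℝ | (∑ i, h i * V i j) ≤ 1} := by ext; simp [hD]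
    rw [this]
    exact isClosed_iInter fun j => isClosed_le
      (continuous_finset_sum _ fun i _ => (continuous_apply i).mul continuous_const)
      continuous_const
  have hDkey : ∀ h ∈ D, ∀ y ∈ convexHull ℝ (Set.range fun j i => V i j),
      ∑ i, h i * y i ≤ 1 := by
    intro h hh y hy
    obtain ⟨w, hw0, hw1, hwV⟩ := exists_hull_weights V hy
    rw [← hwV, sum_mul_mulVec]
    calc ∑ j, w j * ∑ i, h i * V i j ≤ ∑ j, w j * 1 :=
          Finset.sum_le_sum fun j _ => mul_le_mul_of_nonneg_left (hh j) (hw0 j)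
      _ = 1 := by simpa using hw1
  have hDbound : ∀ h ∈ D, ‖h‖ ≤ 2 / r := by
    intro h hh
    rw [pi_norm_le_iff_of_nonneg (div_nonneg (by norm_num) hr.le)]
    intro i
    rw [Real.norm_eq_abs, abs_le]
    have hsingle : ∀ c : ℝ, |c| = 1 → c * h i ≤ 2 / r := by
      intro c hc
      set z : Fin n → ℝ := fun k => if k = i then (r/2) * c else 0 with hzdef
      have hmem : z ∈ convexHull ℝ (Set.range fun j i => V i j) := by
        apply hball
        rw [Metric.mem_ball, dist_zero_right, pi_norm_lt_iff hr]
        intro k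
        show |if k = i then (r/2) * c else 0| < r
        split
        · rw [abs_mul, hc, abs_of_pos (by positivity : (0:ℝ) < r/2)]
          linarith
        · simpa using hr
      have := hDkey h hh _ hmem
      have hs : ∑ k, h k * z k = (r/2) * (c * h i) := by
        rw [Finset.sum_eq_single i]
        · show h i * (if i = i then (r/2) * c else 0) = _
          rw [if_pos rfl]; ring
        · intro k _ hk
          show h k * (if k = i then (r/2) * c else 0) = 0
          rw [if_neg hk, mul_zero]
        · intro hi; exact absurd (Finset.mem_univ i) hi
      rw [hs] at this
      rw [le_div_iff₀ hr]
      nlinarith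
    constructor
    · have := hsingle (-1) (by norm_num)
      linarith
    · have := hsingle 1 (by norm_num)
      linarith
  have hDcompact : IsCompact D :=
    IsCompact.of_isClosed_subset (isCompact_closedBall (0 : Fin n → ℝ) (2/r)) hDclosed
      (fun h hh => by rw [Metric.mem_closedBall, dist_zero_right]; exact hDbound h hh)
  have h0D : (0 : Fin n → ℝ) ∈ D := by intro j; simp
  obtain ⟨hstar, hstarD, hstarmax⟩ := hDcompact.exists_isMaxOn ⟨0, h0D⟩
    (f := fun h : Fin n → ℝ => ∑ i, h i * x i)
    ((continuous_finset_sum _ fun i _ => (continuous_apply i).mul continuous_const).continuousOn)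
  -- the ε-argument via cone separation
  have heps : ∀ ε : ℝ, 0 < ε → ∃ h ∈ D, μ - ε < ∑ i, h i * x i := by
    intro ε hε
    have hbnot : (WithLp.toLp 2 (Fin.snoc x (μ - ε) : Fin (n+1) → ℝ) : EuclideanSpace ℝ (Fin (n+1))) ∉ Ccone V := by
      intro hmem
      obtain ⟨p, hp, hLp⟩ := hmem
      rw [Lmap_eq_iff] at hLp
      have hmemS : μ - ε ∈ S := ⟨p, hp, hLp.1, hLp.2.symm⟩
      have := hleast.2 hmemS
      linarith
    have hC0 : Lmap V 0 ∈ Cset V := ⟨0, fun j => le_refl 0, rfl⟩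
    have hCne : (Ccone V : Set _).Nonempty := ⟨Lmap V 0, hC0⟩
    obtain ⟨y, hy1, hy2⟩ := ProperCone.hyperplane_separation' (PCone V)
      (x₀ := (WithLp.toLp 2 (Fin.snoc x (μ - ε) : Fin (n+1) → ℝ) : EuclideanSpace ℝ (Fin (n+1)))) hbnot
    set t := y (Fin.last n) with htdef
    have ht : 0 ≤ t := by
      have hmem : Lmap V q ∈ Ccone V := ⟨q, hq0, rfl⟩
      have := hy1 _ hmem
      rw [inner_Lmap] at this
      simpa [hqV, hq1] using this
    have hgen : ∀ j, 0 ≤ (∑ i, V i j * y (Fin.castSucc i)) + t := by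
      intro j
      have hmem : Lmap V (Pi.single j 1) ∈ Ccone V := by
        refine ⟨Pi.single j 1, fun k => ?_, rfl⟩
        rw [Pi.single_apply]
        split <;> norm_num
      have := hy1 _ hmem
      rw [inner_Lmap] at this
      simpa [Matrix.mulVec_single, Finset.sum_pi_single] using this
    have hb : (∑ i, y (Fin.castSucc i) * x i) + t * (μ - ε) < 0 := by
      have := hy2
      rwa [real_inner_comm, inner_snoc] at this
    rcases eq_or_lt_of_le ht with hteq | htpos
    · exfalso
      have hx0 : ∑ i, y (Fin.castSucc i) * x i < 0 := by
        rw [← hteq] at hb; linarith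
      have : 0 ≤ ∑ i, y (Fin.castSucc i) * x i := by
        rw [← hVpstar, sum_mul_mulVec]
        apply Finset.sum_nonneg
        intro j _
        apply mul_nonneg (hpstar j)
        have := hgen j
        rw [← hteq] at this
        calc (0:ℝ) ≤ ∑ i, V i j * y (Fin.castSucc i) := by linarith
          _ = ∑ i, y (Fin.castSucc i) * V i j :=
            Finset.sum_congr rfl fun i _ => mul_comm _ _
      linarith
    · refine ⟨fun i => (-1/t) * y (Fin.castSucc i), ?_, ?_⟩
      · intro j
        have hBj := hgen j
        have hcalc : ∑ i, ((-1/t) * y (Fin.castSucc i)) * V i j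
            = (-1/t) * ∑ i, V i j * y (Fin.castSucc i) := by
          rw [Finset.mul_sum]
          exact Finset.sum_congr rfl fun i _ => by ring
        rw [hcalc, show (-1/t) * (∑ i, V i j * y (Fin.castSucc i))
            = -((∑ i, V i j * y (Fin.castSucc i))/t) by ring, neg_le,
          le_div_iff₀ htpos]
        nlinarith
      · have hcalc : ∑ i, ((-1/t) * y (Fin.castSucc i)) * x i
            = (-1/t) * ∑ i, y (Fin.castSucc i) * x i := by
          rw [Finset.mul_sum]
          exact Finset.sum_congr rfl fun i _ => by ring
        rw [hcalc, show (-1/t) * ∑ i, y (Fin.castSucc i) * x i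
            = (- ∑ i, y (Fin.castSucc i) * x i) / t by ring, lt_div_iff₀ htpos]
        nlinarith
  -- dual optimum attains μ
  have hstarval : ∑ i, hstar i * x i = μ := by
    refine le_antisymm ?_ ?_
    · have := weak hstar hstarD
      rwa [dotProduct] at this
    · by_contra hlt
      push_neg at hlt
      obtain ⟨h, hhD, hgt⟩ := heps (μ - ∑ i, hstar i * x i) (by linarith)
      have := hstarmax hhD
      simp only [Set.mem_setOf_eq] at this
      linarith
  have hpsi : psiV V x = μ := rfl
  constructor
  · rw [hpsi]; exact hleast
  · rw [hpsi]
    constructor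
    · exact ⟨hstar, hstarD, by rw [dotProduct, hstarval]⟩
    · rintro s ⟨h, hh, rfl⟩
      exact weak h hh
end

section
/- Let V be a real n×m matrix such that 0 lies in the interior of the convex hull of the columns of V. Then for every x ∈ ℝⁿ and every z ∈ ℝⁿ, the following linear-programming duality holds: max{hᵀz : h ∈ ℝⁿ, hᵀx = ψ_V(x), hᵀV ≤ 1ᵀ componentwise} = min{1ᵀp + ψ_V(x)·k : p ∈ ℝᵐ, k ∈ ℝ, z = V p + k x, p ≥ 0 componentwise}, and both optima are attained. -/
open Matrix

open Finset

lemma shrink_step {ι κ : Type*} [Fintype ι] [Fintype κ] [DecidableEq ι]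
    (v : ι → κ → ℝ) (p c : ι → ℝ) (hp : ∀ j, 0 ≤ p j)
    (hc0 : ∑ j, c j • v j = 0) (hsupp : ∀ j, c j ≠ 0 → p j ≠ 0)
    (j₀ : ι) (hj₀ : 0 < c j₀) :
    ∃ q : ι → ℝ, (∀ j, 0 ≤ q j) ∧ ∑ j, q j • v j = ∑ j, p j • v j ∧
      (univ.filter (q · ≠ 0)) ⊂ (univ.filter (p · ≠ 0)) := by
  set s : Finset ι := univ.filter (fun j => 0 < c j) with hs
  have hj₀s : j₀ ∈ s := by simp [hs, hj₀]
  obtain ⟨j₁, hj₁s, hmin⟩ := s.exists_min_image (fun j => p j / c j) ⟨j₀, hj₀s⟩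
  have hcj₁ : 0 < c j₁ := by simpa [hs] using hj₁s
  set t : ℝ := p j₁ / c j₁ with ht
  have ht0 : 0 ≤ t := div_nonneg (hp j₁) hcj₁.le
  refine ⟨fun j => p j - t * c j, ?_, ?_, ?_⟩
  · intro j
    show (0:ℝ) ≤ p j - t * c j
    by_cases hcj : 0 < c j
    · have : t ≤ p j / c j := hmin j (by simp [hs, hcj])
      have := (le_div_iff₀ hcj).mp this
      linarith
    · push_neg at hcj
      have : t * c j ≤ 0 := mul_nonpos_of_nonneg_of_nonpos ht0 hcj
      have := hp j; linarith
  · have : ∑ j, (p j - t * c j) • v j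
        = ∑ j, p j • v j - t • ∑ j, c j • v j := by
      rw [Finset.smul_sum]
      rw [← Finset.sum_sub_distrib]
      congr 1; ext j
      rw [sub_smul, smul_smul]
  
    rw [this, hc0, smul_zero, sub_zero]
  · constructor
    · intro j hj
      simp only [mem_filter, mem_univ, true_and] at hj ⊢
      intro hpj
      apply hj
      have hcj : c j = 0 := by
        by_contra h; exact (hsupp j h) hpj
      simp [hpj, hcj]
    · intro hsub
      have hj₁mem : j₁ ∈ univ.filter (p · ≠ 0) := by
        simp only [mem_filter, mem_univ, true_and]
        exact hsupp j₁ hcj₁.ne'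
      have := hsub hj₁mem
      simp only [mem_filter, mem_univ, true_and] at this
      apply this
      rw [ht, div_mul_cancel₀ _ hcj₁.ne', sub_self]

lemma cone_caratheodory {ι κ : Type*} [Fintype ι] [Fintype κ] [DecidableEq ι]
    (v : ι → κ → ℝ) (p : ι → ℝ) (hp : ∀ j, 0 ≤ p j) :
    ∃ q : ι → ℝ, (∀ j, 0 ≤ q j) ∧ ∑ j, q j • v j = ∑ j, p j • v j ∧
      LinearIndependent ℝ (fun j : (univ.filter (q · ≠ 0) : Finset ι) => v j) := by
  classical
  suffices H : ∀ (N : ℕ) (p : ι → ℝ), (∀ j, 0 ≤ p j) →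
      (univ.filter (p · ≠ 0)).card ≤ N →
      ∃ q : ι → ℝ, (∀ j, 0 ≤ q j) ∧ ∑ j, q j • v j = ∑ j, p j • v j ∧
        LinearIndependent ℝ (fun j : (univ.filter (q · ≠ 0) : Finset ι) => v j) by
    exact H (univ.filter (p · ≠ 0)).card p hp le_rfl
  intro N
  induction N with
  | zero =>
    intro p hp hcard
    refine ⟨p, hp, rfl, ?_⟩
    have he : univ.filter (p · ≠ 0) = ∅ := card_eq_zero.mp (Nat.le_zero.mp hcard)
    rw [he]
    have : IsEmpty ((∅ : Finset ι) : Finset ι) := ⟨fun x => Finset.notMem_empty x.1 x.2⟩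
    exact linearIndependent_empty_type
  | succ N ih =>
    intro p hp hcard
    by_cases hli : LinearIndependent ℝ (fun j : (univ.filter (p · ≠ 0) : Finset ι) => v j)
    · exact ⟨p, hp, rfl, hli⟩
    · obtain ⟨g, hg0, jg, hjg⟩ := Fintype.not_linearIndependent_iff.mp hli
      set c : ι → ℝ := fun j => if h : j ∈ univ.filter (p · ≠ 0) then g ⟨j, h⟩ else 0 with hc
      have hcp : ∀ j, c j ≠ 0 → p j ≠ 0 := by
        intro j hj
        by_contra hpj
        apply hj
        have : j ∉ univ.filter (p · ≠ 0) := by simp [hpj]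
        show (if h : _ ∈ _ then g ⟨_, h⟩ else 0) = 0
        exact dif_neg this
      have hcsum : ∑ j, c j • v j = 0 := by
        have h1 : ∑ j ∈ univ.filter (p · ≠ 0), c j • v j = ∑ j, c j • v j := by
          apply Finset.sum_filter_of_ne
          intro x _ hx
          apply hcp x
          intro hcx
          exact hx (by rw [hcx, zero_smul])
        rw [← h1, ← Finset.sum_attach (univ.filter (p · ≠ 0)) (fun j => c j • v j), ← hg0,
          Finset.univ_eq_attach]
        apply Finset.sum_congr rfl
        intro j _
        have : c ↑j = g j := dif_pos j.2
        rw [this]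
      have hcjg : c ↑jg = g jg := dif_pos jg.2
      have hstep : ∃ q : ι → ℝ, (∀ j, 0 ≤ q j) ∧ ∑ j, q j • v j = ∑ j, p j • v j ∧
          (univ.filter (q · ≠ 0)) ⊂ (univ.filter (p · ≠ 0)) := by
        rcases hjg.lt_or_gt with hneg | hpos
        · refine shrink_step v p (-c) hp ?_ ?_ ↑jg ?_
          · rw [← neg_zero, ← hcsum, ← Finset.sum_neg_distrib]
            apply Finset.sum_congr rfl; intro j _; rw [Pi.neg_apply, neg_smul]
          · intro j hj; apply hcp; simpa using hj
          · simp only [Pi.neg_apply, hcjg]; linarith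
        · exact shrink_step v p c hp hcsum hcp ↑jg (by rw [hcjg]; exact hpos)
      obtain ⟨q, hq0, hqsum, hss⟩ := hstep
      have hqcard : (univ.filter (q · ≠ 0)).card ≤ N := by
        have := Finset.card_lt_card hss
        omega
      obtain ⟨r, hr0, hrsum, hrli⟩ := ih q hq0 hqcard
      exact ⟨r, hr0, hrsum.trans hqsum, hrli⟩

lemma isClosed_cone_pi {ι κ : Type*} [Fintype ι] [Fintype κ] [DecidableEq ι] (v : ι → κ → ℝ) :
    IsClosed {x : κ → ℝ | ∃ p : ι → ℝ, (∀ j, 0 ≤ p j) ∧ ∑ j, p j • v j = x} := by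
  classical
  have hset : {x : κ → ℝ | ∃ p : ι → ℝ, (∀ j, 0 ≤ p j) ∧ ∑ j, p j • v j = x}
      = ⋃ (J : Finset ι), ⋃ (_ : LinearIndependent ℝ (fun j : J => v j)),
        (fun p : J → ℝ => ∑ j, p j • v ↑j) '' {p | ∀ j, 0 ≤ p j} := by
    ext x
    constructor
    · rintro ⟨p, hp, hsum⟩
      obtain ⟨q, hq0, hqsum, hqli⟩ := cone_caratheodory v p hp
      refine Set.mem_iUnion.mpr ⟨univ.filter (q · ≠ 0), Set.mem_iUnion.mpr ⟨hqli, ?_⟩⟩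
      refine ⟨fun j => q ↑j, fun j => hq0 ↑j, ?_⟩
      show ∑ j : (univ.filter (q · ≠ 0) : Finset ι), q ↑j • v ↑j = x
      rw [Finset.univ_eq_attach, Finset.sum_attach (univ.filter (q · ≠ 0)) (fun j => q j • v j)]
      rw [Finset.sum_filter_of_ne (fun x _ hx => by
        intro hqx; exact hx (by rw [hqx, zero_smul]))]
      rw [hqsum, hsum]
    · intro hx
      obtain ⟨J, hJ⟩ := Set.mem_iUnion.mp hx
      obtain ⟨_, p', ⟨hp', hsum⟩⟩ := Set.mem_iUnion.mp hJ
      refine ⟨fun j => if h : j ∈ J then p' ⟨j, h⟩ else 0, ?_, ?_⟩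
      · intro j
        by_cases h : j ∈ J
        · simp only [dif_pos h]; exact hp' _
        · simp only [dif_neg h]; exact le_rfl
      · have h1 : ∑ j ∈ J, (if h : j ∈ J then p' ⟨j, h⟩ else 0) • v j
            = ∑ j : ι, (if h : j ∈ J then p' ⟨j, h⟩ else 0) • v j :=
          Finset.sum_subset (Finset.subset_univ J)
            (fun x _ hx => by rw [dif_neg hx, zero_smul])
        show ∑ j : ι, (if h : j ∈ J then p' ⟨j, h⟩ else 0) • v j = x
        rw [← h1, ← Finset.sum_attach J (fun j => (if h : j ∈ J then p' ⟨j, h⟩ else 0) • v j),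
          ← hsum]
        apply Finset.sum_congr (Finset.univ_eq_attach ..).symm
        intro j _
        rw [dif_pos j.2]
  rw [hset]
  apply isClosed_iUnion_of_finite
  intro J
  apply isClosed_iUnion_of_finite
  intro hJ
  let f : (J → ℝ) →ₗ[ℝ] (κ → ℝ) :=
    { toFun := fun p => ∑ j, p j • v ↑j
      map_add' := by intro a b; simp [add_smul, Finset.sum_add_distrib]
      map_smul' := by intro r a; simp [smul_smul, Finset.smul_sum]
      }
  have hker : LinearMap.ker f = ⊥ := by
    rw [LinearMap.ker_eq_bot']
    intro q hq
    funext j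
    exact Fintype.linearIndependent_iff.mp hJ q hq j
  have hclosedmap : IsClosedMap f := (f.isClosedEmbedding_of_injective hker).isClosedMap
  have horth : IsClosed {p : J → ℝ | ∀ j, 0 ≤ p j} := by
    have : {p : J → ℝ | ∀ j, 0 ≤ p j} = ⋂ j, {p | 0 ≤ p j} := by ext; simp [Set.mem_iInter]
    rw [this]
    exact isClosed_iInter fun j => isClosed_le continuous_const (continuous_apply j)
  exact hclosedmap _ horth

lemma farkas {ι κ : Type*} [Fintype ι] [Fintype κ] [DecidableEq ι]
    (v : ι → κ → ℝ) (b : κ → ℝ)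
    (h : ¬ ∃ p : ι → ℝ, (∀ j, 0 ≤ p j) ∧ ∑ j, p j • v j = b) :
    ∃ y : κ → ℝ, (∀ j, 0 ≤ ∑ i, v j i * y i) ∧ ∑ i, b i * y i < 0 := by
  classical
  set e := EuclideanSpace.equiv κ ℝ with he
  have hinner : ∀ a y : EuclideanSpace ℝ κ, (inner ℝ a y : ℝ) = ∑ i, e a i * e y i := by
    intro a y
    simp [PiLp.inner_apply, RCLike.inner_apply, starRingEnd_apply, he, EuclideanSpace.equiv]
    exact Finset.sum_congr rfl fun i _ => mul_comm _ _
  set C : Set (EuclideanSpace ℝ κ) :=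
    {x | ∃ p : ι → ℝ, (∀ j, 0 ≤ p j) ∧ ∑ j, p j • v j = e x} with hC
  have hCclosed : IsClosed C := (isClosed_cone_pi v).preimage e.continuous
  let K : ConvexCone ℝ (EuclideanSpace ℝ κ) :=
    { carrier := C
      smul_mem' := by
        rintro c hc x ⟨p, hp, hsum⟩
        refine ⟨c • p, fun j => mul_nonneg hc.le (hp j), ?_⟩
        rw [_root_.map_smul]
        rw [← hsum, Finset.smul_sum]
        apply Finset.sum_congr rfl
        intro j _
        rw [Pi.smul_apply, smul_smul]
        rfl
      add_mem' := by
        rintro x ⟨p, hp, hpsum⟩ x' ⟨q, hq, hqsum⟩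
        refine ⟨p + q, fun j => add_nonneg (hp j) (hq j), ?_⟩
        rw [_root_.map_add, ← hpsum, ← hqsum, ← Finset.sum_add_distrib]
        apply Finset.sum_congr rfl
        intro j _
        rw [Pi.add_apply, add_smul] }
  have hbK : (e.symm b) ∉ K := by
    rintro ⟨p, hp, hsum⟩
    exact h ⟨p, hp, by rwa [e.apply_symm_apply] at hsum⟩
  obtain ⟨y, hy1, hy2⟩ := ProperCone.hyperplane_separation'
    (⟨K.toPointedCone ⟨0, fun j => le_rfl, by simp⟩, hCclosed⟩ : ProperCone ℝ (EuclideanSpace ℝ κ)) hbK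
  refine ⟨e y, ?_, ?_⟩
  · intro j
    have hvj : (e.symm (v j)) ∈ K := by
      refine ⟨Pi.single j 1, ?_, ?_⟩
      · intro i
        by_cases hij : i = j
        · subst hij; simp
        · simp [Pi.single_eq_of_ne hij]
      · rw [e.apply_symm_apply]
        rw [Finset.sum_eq_single j (fun i _ hij => by simp [Pi.single_eq_of_ne hij]) (by simp)]
        simp
    have := hy1 _ hvj
    rwa [hinner, e.apply_symm_apply] at this
  · have := hy2
    rw [real_inner_comm, hinner, e.apply_symm_apply] at this
    simpa [mul_comm] using this

lemma sum_smul_dot {ι κ : Type*} [Fintype ι] [Fintype κ] (v : ι → κ → ℝ) (u : ι → ℝ) (y : κ → ℝ) :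
    ∑ i, (∑ j, u j • v j) i * y i = ∑ j, u j * ∑ i, v j i * y i := by
  simp only [Finset.sum_apply, Pi.smul_apply, smul_eq_mul, Finset.sum_mul, Finset.mul_sum]
  rw [Finset.sum_comm]
  exact Finset.sum_congr rfl fun j _ => Finset.sum_congr rfl fun i _ => by ring


lemma weak_duality {ι κ : Type*} [Fintype ι] [Fintype κ]
    {v : ι → κ → ℝ} {c : ι → ℝ} {b : κ → ℝ} {u : ι → ℝ} {y : κ → ℝ}
    (hu : ∀ j, 0 ≤ u j) (hAu : ∑ j, u j • v j = b) (hy : ∀ j, ∑ i, v j i * y i ≤ c j) :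
    ∑ i, b i * y i ≤ ∑ j, c j * u j := by
  rw [← hAu, sum_smul_dot]
  apply Finset.sum_le_sum
  intro j _
  calc u j * ∑ i, v j i * y i ≤ u j * c j := mul_le_mul_of_nonneg_left (hy j) (hu j)
  _ = c j * u j := mul_comm _ _



theorem lp_strong_duality {ι κ : Type*} [Fintype ι] [Fintype κ] [DecidableEq ι]
    (v : ι → κ → ℝ) (c : ι → ℝ) (b : κ → ℝ)
    (hfeas : ∃ u : ι → ℝ, (∀ j, 0 ≤ u j) ∧ ∑ j, u j • v j = b)
    (hdfeas : ∃ y : κ → ℝ, ∀ j, ∑ i, v j i * y i ≤ c j) :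
    ∃ (u : ι → ℝ) (y : κ → ℝ), (∀ j, 0 ≤ u j) ∧ ∑ j, u j • v j = b ∧
      (∀ j, ∑ i, v j i * y i ≤ c j) ∧ ∑ j, c j * u j = ∑ i, b i * y i := by
  classical
  set col : (ι ⊕ κ ⊕ κ ⊕ ι ⊕ Unit) → (κ ⊕ ι ⊕ Unit) → ℝ :=
    Sum.elim (fun j => Sum.elim (v j) (Sum.elim 0 (fun _ => c j)))
    (Sum.elim (fun i => Sum.elim 0 (Sum.elim (fun j => v j i) (fun _ => -b i)))
    (Sum.elim (fun i => Sum.elim 0 (Sum.elim (fun j => -v j i) (fun _ => b i)))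
    (Sum.elim (fun j => Sum.elim 0 (Sum.elim (Pi.single j 1) 0))
    (fun _ => Sum.elim 0 (Sum.elim 0 (fun _ => 1)))))) with hcol
  set tgt : (κ ⊕ ι ⊕ Unit) → ℝ := Sum.elim b (Sum.elim c 0) with htgt
  by_cases hsolv : ∃ P : (ι ⊕ κ ⊕ κ ⊕ ι ⊕ Unit) → ℝ,
      (∀ r, 0 ≤ P r) ∧ ∑ r, P r • col r = tgt
  · obtain ⟨P, hP0, hPsum⟩ := hsolv
    have hEval : ∀ w, ∑ r, P r * col r w = tgt w := by
      intro w
      rw [← hPsum]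
      simp [Finset.sum_apply]
    have e1 : ∀ i, ∑ x, P (Sum.inl x) * v x i = b i := fun i => by
      simpa [hcol, htgt, Fintype.sum_sum_type, Pi.single_apply, mul_ite]
        using hEval (Sum.inl i)
    have e2 : ∀ j, ∑ x, P (Sum.inr (Sum.inl x)) * v j x +
        (-∑ x, P (Sum.inr (Sum.inr (Sum.inl x))) * v j x
          + P (Sum.inr (Sum.inr (Sum.inr (Sum.inl j))))) = c j := fun j => by
      simpa [hcol, htgt, Fintype.sum_sum_type, Pi.single_apply, mul_ite]
        using hEval (Sum.inr (Sum.inl j))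
    have e3 : ∑ x, P (Sum.inl x) * c x +
        (-∑ x, P (Sum.inr (Sum.inl x)) * b x +
          (∑ x, P (Sum.inr (Sum.inr (Sum.inl x))) * b x
            + P (Sum.inr (Sum.inr (Sum.inr (Sum.inr PUnit.unit)))))) = 0 := by
      simpa [hcol, htgt, Fintype.sum_sum_type, Pi.single_apply, mul_ite]
        using hEval (Sum.inr (Sum.inr ()))
    have hAu : ∑ j, P (Sum.inl j) • v j = b := by
      funext i
      simp only [Finset.sum_apply, Pi.smul_apply, smul_eq_mul]
      exact e1 i
    have hyfeas : ∀ j, ∑ i, v j i *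
        (P (Sum.inr (Sum.inl i)) - P (Sum.inr (Sum.inr (Sum.inl i)))) ≤ c j := by
      intro j
      have h2 := e2 j
      have hslj : 0 ≤ P (Sum.inr (Sum.inr (Sum.inr (Sum.inl j)))) := hP0 _
      have hexp : ∑ i, v j i *
          (P (Sum.inr (Sum.inl i)) - P (Sum.inr (Sum.inr (Sum.inl i))))
          = ∑ i, P (Sum.inr (Sum.inl i)) * v j i
            - ∑ i, P (Sum.inr (Sum.inr (Sum.inl i))) * v j i := by
        rw [← Finset.sum_sub_distrib]
        exact Finset.sum_congr rfl fun i _ => by ring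
      rw [hexp]; linarith
    refine ⟨fun j => P (Sum.inl j),
      fun i => P (Sum.inr (Sum.inl i)) - P (Sum.inr (Sum.inr (Sum.inl i))),
      fun j => hP0 _, hAu, hyfeas, ?_⟩
    have hwd : ∑ i, b i * (P (Sum.inr (Sum.inl i)) - P (Sum.inr (Sum.inr (Sum.inl i))))
        ≤ ∑ j, c j * P (Sum.inl j) := weak_duality (fun j => hP0 _) hAu hyfeas
    have hby : ∑ i, b i * (P (Sum.inr (Sum.inl i)) - P (Sum.inr (Sum.inr (Sum.inl i))))
        = ∑ i, P (Sum.inr (Sum.inl i)) * b i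
          - ∑ i, P (Sum.inr (Sum.inr (Sum.inl i))) * b i := by
      rw [← Finset.sum_sub_distrib]
      exact Finset.sum_congr rfl fun i _ => by ring
    have hcu : ∑ j, c j * P (Sum.inl j) = ∑ j, P (Sum.inl j) * c j :=
      Finset.sum_congr rfl fun j _ => mul_comm _ _
    have ht0 : 0 ≤ P (Sum.inr (Sum.inr (Sum.inr (Sum.inr PUnit.unit)))) := hP0 _
    show ∑ j, c j * P (Sum.inl j)
      = ∑ i, b i * (P (Sum.inr (Sum.inl i)) - P (Sum.inr (Sum.inr (Sum.inl i))))
    linarith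
  · obtain ⟨Y, hY1, hY2⟩ := farkas col tgt hsolv
    obtain ⟨u₀, hu₀, hAu₀⟩ := hfeas
    obtain ⟨y₀, hy₀⟩ := hdfeas
    set w := fun i => Y (Sum.inl i) with hw
    set zc := fun j => Y (Sum.inr (Sum.inl j)) with hzc
    set α := Y (Sum.inr (Sum.inr ())) with hα
    have hA : ∀ j, 0 ≤ ∑ i, v j i * w i + c j * α := by
      intro j
      have := hY1 (Sum.inl j)
      simpa [hcol, Fintype.sum_sum_type] using this
    have hB : ∀ i, 0 ≤ ∑ j, v j i * zc j - b i * α := by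
      intro i
      have := hY1 (Sum.inr (Sum.inl i))
      simp [hcol, Fintype.sum_sum_type] at this
      linarith [this]
    have hCeq : ∀ i, ∑ j, v j i * zc j = b i * α := by
      intro i
      have := hY1 (Sum.inr (Sum.inr (Sum.inl i)))
      simp [hcol, Fintype.sum_sum_type, Finset.sum_neg_distrib] at this
      have hb := hB i
      linarith [this, hb]
    have hD : ∀ j, 0 ≤ zc j := by
      intro j
      have := hY1 (Sum.inr (Sum.inr (Sum.inr (Sum.inl j))))
      simpa [hcol, Fintype.sum_sum_type, Pi.single_apply, mul_ite] using this
    have hE : 0 ≤ α := by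
      have := hY1 (Sum.inr (Sum.inr (Sum.inr (Sum.inr ()))))
      simpa [hcol, Fintype.sum_sum_type] using this
    have hF : ∑ i, b i * w i + ∑ j, c j * zc j < 0 := by
      have := hY2
      simp [htgt, Fintype.sum_sum_type, mul_comm] at this
      linarith [this]
    have hzcsum : ∑ j, zc j • v j = α • b := by
      funext i
      simp only [Finset.sum_apply, Pi.smul_apply, smul_eq_mul]
      calc ∑ j, zc j * v j i = ∑ j, v j i * zc j :=
            Finset.sum_congr rfl fun j _ => mul_comm _ _
      _ = b i * α := hCeq i
      _ = α * b i := mul_comm _ _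
    exfalso
    rcases eq_or_lt_of_le hE with hα0 | hαpos
    · have hzc0 : ∑ j, zc j • v j = 0 := by rw [hzcsum, ← hα0, zero_smul]
      have hbw : 0 ≤ ∑ i, b i * w i := by
        rw [← hAu₀, sum_smul_dot]
        apply Finset.sum_nonneg
        intro j _
        apply mul_nonneg (hu₀ j)
        have := hA j
        rw [← hα0] at this
        simpa using this
      have hczc : 0 ≤ ∑ j, c j * zc j := by
        have h0 : ∑ j, zc j * ∑ i, v j i * y₀ i = 0 := by
          rw [← sum_smul_dot v zc y₀, hzc0]
          simp
        have : ∑ j, zc j * ∑ i, v j i * y₀ i ≤ ∑ j, c j * zc j := by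
          apply Finset.sum_le_sum
          intro j _
          calc zc j * ∑ i, v j i * y₀ i ≤ zc j * c j :=
            mul_le_mul_of_nonneg_left (hy₀ j) (hD j)
          _ = c j * zc j := mul_comm _ _
        linarith
      linarith
    · have hu'0 : ∀ j, 0 ≤ α⁻¹ * zc j := fun j =>
        mul_nonneg (inv_nonneg.mpr hE) (hD j)
      have hAu' : ∑ j, (α⁻¹ * zc j) • v j = b := by
        have h5 : ∑ j, (α⁻¹ * zc j) • v j = α⁻¹ • ∑ j, zc j • v j := by
          rw [Finset.smul_sum]
          exact Finset.sum_congr rfl fun j _ => by rw [smul_smul]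
        rw [h5, hzcsum, smul_smul, inv_mul_cancel₀ hαpos.ne', one_smul]
      have hy'feas : ∀ j, ∑ i, v j i * (-α⁻¹ * w i) ≤ c j := by
        intro j
        have hAj := hA j
        have h6 : ∑ i, v j i * (-α⁻¹ * w i) = -α⁻¹ * ∑ i, v j i * w i := by
          rw [Finset.mul_sum]
          exact Finset.sum_congr rfl fun i _ => by ring
        rw [h6]
        have hinv : 0 < α⁻¹ := inv_pos.mpr hαpos
        have h7 : -α⁻¹ * ∑ i, v j i * w i ≤ -α⁻¹ * (-(c j * α)) := by
          apply mul_le_mul_of_nonpos_left _ (by linarith)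
          linarith
        have h8 : -α⁻¹ * (-(c j * α)) = c j := by
          field_simp
        linarith
      have hwdy : ∑ i, b i * (-α⁻¹ * w i) ≤ ∑ j, c j * (α⁻¹ * zc j) :=
        weak_duality hu'0 hAu' hy'feas
      have hl : ∑ i, b i * (-α⁻¹ * w i) = -α⁻¹ * ∑ i, b i * w i := by
        rw [Finset.mul_sum]
        exact Finset.sum_congr rfl fun i _ => by ring
      have hr : ∑ j, c j * (α⁻¹ * zc j) = α⁻¹ * ∑ j, c j * zc j := by
        rw [Finset.mul_sum]
        exact Finset.sum_congr rfl fun j _ => by ring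
      rw [hl, hr] at hwdy
      have hinv : 0 < α⁻¹ := inv_pos.mpr hαpos
      nlinarith [hwdy, hF, hinv]

lemma mulVec_eq_sum_smul {n : ℕ} {m : Type*} [Fintype m]
    (V : Matrix (Fin n) m ℝ) (p : m → ℝ) :
    V.mulVec p = ∑ j, p j • (fun i => V i j) := by
  funext i
  simp [Matrix.mulVec, dotProduct, Finset.sum_apply, mul_comm]


lemma exists_feasible {n : ℕ} {m : Type*} [Fintype m] [DecidableEq m]
    (V : Matrix (Fin n) m ℝ) (hV : ZeroInInterior V) (x : Fin n → ℝ) :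
    ∃ p : m → ℝ, (∀ j, 0 ≤ p j) ∧ V.mulVec p = x := by
  classical
  set C : Set (Fin n → ℝ) :=
    {y | ∃ p : m → ℝ, (∀ j, 0 ≤ p j) ∧ ∑ j, p j • (fun i => V i j) = y} with hC
  have hconv : Convex ℝ C := by
    rintro y₁ ⟨p, hp, hpsum⟩ y₂ ⟨q, hq, hqsum⟩ a b ha hb hab
    refine ⟨a • p + b • q, fun j => add_nonneg (mul_nonneg ha (hp j)) (mul_nonneg hb (hq j)), ?_⟩
    rw [← hpsum, ← hqsum]
    rw [Finset.smul_sum, Finset.smul_sum, ← Finset.sum_add_distrib]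
    apply Finset.sum_congr rfl
    intro j _
    simp only [Pi.add_apply, Pi.smul_apply, smul_eq_mul]
    rw [add_smul, smul_smul, smul_smul]
  have hcols : Set.range (fun j i => V i j) ⊆ C := by
    rintro _ ⟨j, rfl⟩
    refine ⟨Pi.single j 1, ?_, ?_⟩
    · intro i
      by_cases hij : i = j
      · subst hij; simp
      · simp [Pi.single_eq_of_ne hij]
    · rw [Finset.sum_eq_single j (fun i _ hij => by simp [Pi.single_eq_of_ne hij]) (by simp)]
      simp
  have hhull : convexHull ℝ (Set.range fun j i => V i j) ⊆ C := convexHull_min hcols hconv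
  have hmem : convexHull ℝ (Set.range fun j i => V i j) ∈ nhds (0 : Fin n → ℝ) :=
    mem_interior_iff_mem_nhds.mp hV
  obtain ⟨ε, hε, hball⟩ := Metric.mem_nhds_iff.mp hmem
  have hCx : ∀ y : Fin n → ℝ, ∃ p : m → ℝ, (∀ j, 0 ≤ p j) ∧ ∑ j, p j • (fun i => V i j) = y := by
    intro y
    by_cases hy : y = 0
    · exact ⟨0, fun j => le_rfl, by simp [hy]⟩
    · have hny : 0 < ‖y‖ := norm_pos_iff.mpr hy
      set r : ℝ := ε / (2 * ‖y‖) with hr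
      have hrpos : 0 < r := div_pos hε (by positivity)
      have hmemb : r • y ∈ Metric.ball (0 : Fin n → ℝ) ε := by
        rw [Metric.mem_ball, dist_zero_right, norm_smul, Real.norm_eq_abs,
          abs_of_pos hrpos, hr]
        have h9 : ε / (2 * ‖y‖) * ‖y‖ = ε / 2 := by field_simp
        rw [h9]
        linarith
      obtain ⟨p, hp, hpsum⟩ := hhull (hball hmemb)
      refine ⟨r⁻¹ • p, fun j => mul_nonneg (inv_nonneg.mpr hrpos.le) (hp j), ?_⟩
      have : ∑ j, (r⁻¹ • p) j • (fun i => V i j) = r⁻¹ • ∑ j, p j • (fun i => V i j) := by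
        rw [Finset.smul_sum]
        exact Finset.sum_congr rfl fun j _ => by
          simp only [Pi.smul_apply, smul_eq_mul]
          rw [smul_smul]
      rw [this, hpsum, smul_smul, inv_mul_cancel₀ hrpos.ne', one_smul]
  obtain ⟨p, hp, hpsum⟩ := hCx x
  exact ⟨p, hp, by rw [mulVec_eq_sum_smul]; exact hpsum⟩


lemma psiV_attained {n : ℕ} {m : Type*} [Fintype m] [DecidableEq m]
    (V : Matrix (Fin n) m ℝ) (hV : ZeroInInterior V) (x : Fin n → ℝ) :
    ∃ (p : m → ℝ) (h : Fin n → ℝ), (∀ j, 0 ≤ p j) ∧ V.mulVec p = x ∧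
      (∀ j, (∑ i, h i * V i j) ≤ 1) ∧ (∑ i, h i * x i = psiV V x) ∧
      psiV V x = ∑ j, p j := by
  classical
  obtain ⟨u, y, hu0, hAu, hyfeas, heq⟩ := lp_strong_duality (fun j i => V i j) 1 x
    (by obtain ⟨p, hp, hps⟩ := exists_feasible V hV x
        exact ⟨p, hp, by rw [← mulVec_eq_sum_smul]; exact hps⟩)
    ⟨0, fun j => by simp⟩
  have hmemb : (∑ j, u j) ∈ {s : ℝ | ∃ p : m → ℝ, (∀ j, 0 ≤ p j) ∧ V.mulVec p = x ∧ s = ∑ j, p j} :=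
    ⟨u, hu0, by rw [mulVec_eq_sum_smul]; exact hAu, rfl⟩
  have hsimp : ∑ j, (1 : m → ℝ) j * u j = ∑ j, u j :=
    Finset.sum_congr rfl fun j _ => one_mul _
  have hlb : ∀ s ∈ {s : ℝ | ∃ p : m → ℝ, (∀ j, 0 ≤ p j) ∧ V.mulVec p = x ∧ s = ∑ j, p j},
      ∑ j, u j ≤ s := by
    rintro s ⟨p, hp, hps, rfl⟩
    have hwd : ∑ i, x i * y i ≤ ∑ j, (1 : m → ℝ) j * p j :=
      weak_duality hp (by rw [← mulVec_eq_sum_smul]; exact hps) hyfeas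
    have h1 : ∑ j, (1 : m → ℝ) j * p j = ∑ j, p j :=
      Finset.sum_congr rfl fun j _ => one_mul _
    rw [hsimp] at heq
    rw [h1] at hwd
    linarith
  have hpsi : psiV V x = ∑ j, u j := by
    unfold psiV
    apply le_antisymm
    · exact csInf_le ⟨0, fun s hs => by
        obtain ⟨p, hp, _, rfl⟩ := hs
        exact Finset.sum_nonneg fun j _ => hp j⟩ hmemb
    · exact le_csInf ⟨_, hmemb⟩ hlb
  refine ⟨u, y, hu0, by rw [mulVec_eq_sum_smul]; exact hAu, ?_, ?_, hpsi⟩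
  · intro j
    have := hyfeas j
    calc ∑ i, y i * V i j = ∑ i, V i j * y i := Finset.sum_congr rfl fun i _ => mul_comm _ _
    _ ≤ 1 := this
  · rw [hsimp] at heq
    rw [hpsi, heq]
    exact Finset.sum_congr rfl fun i _ => mul_comm _ _

lemma key_bound {n m : ℕ} (V : Matrix (Fin n) (Fin m) ℝ) {x z h : Fin n → ℝ}
    {p : Fin m → ℝ} {k ψ : ℝ}
    (hp : ∀ j, 0 ≤ p j) (hz : z = V.mulVec p + k • x)
    (hfeas : ∀ j, ∑ i, h i * V i j ≤ 1) (hhx : ∑ i, h i * x i = ψ) :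
    h ⬝ᵥ z ≤ (∑ j, p j) + ψ * k := by
  have h1 : h ⬝ᵥ z = ∑ j, (∑ i, h i * V i j) * p j + k * ∑ i, h i * x i := by
    rw [hz]
    simp only [dotProduct, Pi.add_apply, Pi.smul_apply, smul_eq_mul, mul_add,
      Finset.sum_add_distrib]
    congr 1
    · calc ∑ i, h i * (V.mulVec p) i = ∑ i, ∑ j, h i * (V i j * p j) := by
            apply Finset.sum_congr rfl
            intro i _
            simp only [Matrix.mulVec, dotProduct]
            rw [Finset.mul_sum]
      _ = ∑ j, ∑ i, h i * (V i j * p j) := Finset.sum_comm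
      _ = ∑ j, (∑ i, h i * V i j) * p j := by
            apply Finset.sum_congr rfl
            intro j _
            rw [Finset.sum_mul]
            exact Finset.sum_congr rfl fun i _ => by ring
    · rw [Finset.mul_sum]
      exact Finset.sum_congr rfl fun i _ => by ring
  rw [h1, hhx]
  have h2 : ∑ j, (∑ i, h i * V i j) * p j ≤ ∑ j, p j := by
    apply Finset.sum_le_sum
    intro j _
    calc (∑ i, h i * V i j) * p j ≤ 1 * p j := mul_le_mul_of_nonneg_right (hfeas j) (hp j)
    _ = p j := one_mul _
  have h3 : k * ψ = ψ * k := mul_comm _ _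
  linarith


/-- LP duality for the directional derivative of `ψ_V`:
`max {hᵀz : hᵀx = ψ_V(x), hᵀV ≤ 1ᵀ} = min {1ᵀp + ψ_V(x)k : z = Vp + kx, p ≥ 0}`,
with both optima attained. -/
theorem psiV_dirDeriv_duality {n m : ℕ} (V : Matrix (Fin n) (Fin m) ℝ)
    (hV : ZeroInInterior V) (x z : Fin n → ℝ) :
    ∃ d : ℝ,
      IsGreatest {s : ℝ | ∃ h : Fin n → ℝ,
        h ⬝ᵥ x = psiV V x ∧ (∀ j, (∑ i, h i * V i j) ≤ 1) ∧ s = h ⬝ᵥ z} d ∧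
      IsLeast {s : ℝ | ∃ (p : Fin m → ℝ) (k : ℝ), (∀ j, 0 ≤ p j) ∧
        z = V.mulVec p + k • x ∧ s = (∑ j, p j) + psiV V x * k} d := by
  classical
  obtain ⟨p₀, h₀, hp₀0, hp₀, hh₀feas, hh₀x, hψ0⟩ := psiV_attained V hV x
  set ψ := psiV V x with hψdef
  set v : (Fin m ⊕ Unit ⊕ Unit) → (Fin n → ℝ) :=
    Sum.elim (fun j i => V i j) (Sum.elim (fun _ => x) (fun _ => -x)) with hv
  set c : (Fin m ⊕ Unit ⊕ Unit) → ℝ :=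
    Sum.elim 1 (Sum.elim (fun _ => ψ) (fun _ => -ψ)) with hc
  have hfeas : ∃ u : (Fin m ⊕ Unit ⊕ Unit) → ℝ, (∀ r, 0 ≤ u r) ∧ ∑ r, u r • v r = z := by
    obtain ⟨q, hq, hqz⟩ := exists_feasible V hV z
    refine ⟨Sum.elim q 0, ?_, ?_⟩
    · rintro (j | j)
      · exact hq j
      · exact le_rfl
    · rw [Fintype.sum_sum_type]
      have hz0 : ∑ r : Unit ⊕ Unit, Sum.elim q (0 : Unit ⊕ Unit → ℝ) (Sum.inr r) • v (Sum.inr r)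
          = 0 := by
        apply Finset.sum_eq_zero
        intro r _
        simp
      rw [hz0, add_zero]
      rw [← hqz, mulVec_eq_sum_smul]
      apply Finset.sum_congr rfl
      intro j _
      simp [hv]
  have hdfeas : ∃ y : Fin n → ℝ, ∀ r, ∑ i, v r i * y i ≤ c r := by
    refine ⟨h₀, ?_⟩
    rintro (j | (u | u))
    · simp only [hv, hc, Sum.elim_inl, Pi.one_apply]
      calc ∑ i, V i j * h₀ i = ∑ i, h₀ i * V i j :=
        Finset.sum_congr rfl fun i _ => mul_comm _ _
      _ ≤ 1 := hh₀feas j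
    · simp only [hv, hc, Sum.elim_inr, Sum.elim_inl]
      calc ∑ i, x i * h₀ i = ∑ i, h₀ i * x i :=
        Finset.sum_congr rfl fun i _ => mul_comm _ _
      _ ≤ ψ := le_of_eq hh₀x
    · simp only [hv, hc, Sum.elim_inr, Pi.neg_apply]
      have h5 : ∑ i, -x i * h₀ i = -∑ i, h₀ i * x i := by
        rw [← Finset.sum_neg_distrib]
        exact Finset.sum_congr rfl fun i _ => by ring
      rw [h5, hh₀x]
  obtain ⟨u, y, hu0, hAu, hyfeas, heq⟩ := lp_strong_duality v c z hfeas hdfeas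
  set p : Fin m → ℝ := fun j => u (Sum.inl j) with hp
  set k : ℝ := u (Sum.inr (Sum.inl ())) - u (Sum.inr (Sum.inr ())) with hk
  have hzeq : z = V.mulVec p + k • x := by
    rw [← hAu, Fintype.sum_sum_type, Fintype.sum_sum_type]
    simp only [Finset.univ_unique, Finset.sum_singleton]
    rw [mulVec_eq_sum_smul]
    congr 1
    simp only [hv, Sum.elim_inr, Sum.elim_inl]
    rw [hk, smul_neg, sub_smul, ← sub_eq_add_neg]
  have hobj : ∑ r, c r * u r = (∑ j, p j) + ψ * k := by
    rw [Fintype.sum_sum_type, Fintype.sum_sum_type]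
    simp only [Finset.univ_unique, Finset.sum_singleton, hc, hp, hk, Sum.elim_inl,
      Sum.elim_inr, Pi.one_apply, one_mul]
    ring
  have hyV : ∀ j, ∑ i, y i * V i j ≤ 1 := by
    intro j
    have := hyfeas (Sum.inl j)
    simp only [hv, hc, Sum.elim_inl, Pi.one_apply] at this
    calc ∑ i, y i * V i j = ∑ i, V i j * y i :=
      Finset.sum_congr rfl fun i _ => mul_comm _ _
    _ ≤ 1 := this
  have hyx : y ⬝ᵥ x = ψ := by
    have h1 := hyfeas (Sum.inr (Sum.inl ()))
    have h2 := hyfeas (Sum.inr (Sum.inr ()))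
    simp only [hv, hc, Sum.elim_inr, Sum.elim_inl, Pi.neg_apply] at h1 h2
    have h3 : ∑ i, -x i * y i = -∑ i, x i * y i := by
      rw [← Finset.sum_neg_distrib]
      exact Finset.sum_congr rfl fun i _ => by ring
    have h4 : y ⬝ᵥ x = ∑ i, x i * y i := by
      simp only [dotProduct]
      exact Finset.sum_congr rfl fun i _ => mul_comm _ _
    rw [h4]
    rw [h3] at h2
    linarith
  have hd : (∑ j, p j) + ψ * k = y ⬝ᵥ z := by
    calc (∑ j, p j) + ψ * k = ∑ r, c r * u r := hobj.symm
    _ = ∑ i, z i * y i := heq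
    _ = y ⬝ᵥ z := by
        simp only [dotProduct]
        exact Finset.sum_congr rfl fun i _ => mul_comm _ _
  refine ⟨(∑ j, p j) + ψ * k, ⟨⟨y, hyx, hyV, hd⟩, ?_⟩, ⟨⟨p, k, fun j => hu0 _, hzeq, rfl⟩, ?_⟩⟩
  · rintro s ⟨h', hh'x, hh'feas, rfl⟩
    exact key_bound V (fun j => hu0 _) hzeq hh'feas
      (by simpa [dotProduct] using hh'x)
  · rintro s ⟨p', k', hp', hz', rfl⟩
    rw [hd]
    exact key_bound V hp' hz' hyV (by simpa [dotProduct] using hyx)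
end

section
/- Let V be a real n×m matrix such that 0 lies in the interior of the convex hull of the columns of V, let B be a real n×n_w matrix, let η_w ∈ ℝ, and let P be a real m×(2n_w) matrix satisfying: P ≥ 0 componentwise, the n×(2n_w) matrix [B, −B] (horizontal concatenation) equals V P, and η_w·1ᵀ = 1ᵀP. Then for every w ∈ ℝ^{n_w}, ψ_V(B w) ≤ η_w · |w|₁, where |w|₁ denotes the sum of the absolute values of the entries of w. -/
open Matrix

/-- Input condition (9b): if `P ≥ 0`, `[B, −B] = VP` and `η_w 1ᵀ = 1ᵀP`, then
`ψ_V(Bw) ≤ η_w |w|₁` for every `w`. -/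
theorem psiV_input_bound {n m nw : ℕ} (V : Matrix (Fin n) (Fin m) ℝ)
    (hV : ZeroInInterior V) (B : Matrix (Fin n) (Fin nw) ℝ) (ηw : ℝ)
    (P : Matrix (Fin m) (Fin nw ⊕ Fin nw) ℝ)
    (hP : ∀ i j, 0 ≤ P i j)
    (hBP : Matrix.fromCols B (-B) = V * P)
    (hη : ∀ j, ηw = ∑ i, P i j)
    (w : Fin nw → ℝ) :
    psiV V (B.mulVec w) ≤ ηw * ∑ i, |w i| := by
  set q : (Fin nw ⊕ Fin nw) → ℝ := Sum.elim (fun i => max (w i) 0) (fun i => max (-w i) 0)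
    with hq
  have hq0 : ∀ k, 0 ≤ q k := by rintro (k | k) <;> exact le_max_right _ _
  set p : Fin m → ℝ := P.mulVec q with hp
  have hp0 : ∀ j, 0 ≤ p j := by
    intro j
    simp only [hp, Matrix.mulVec, dotProduct]
    exact Finset.sum_nonneg fun k _ => mul_nonneg (hP j k) (hq0 k)
  have hVp : V.mulVec p = B.mulVec w := by
    rw [hp, Matrix.mulVec_mulVec, ← hBP, hq, Matrix.fromCols_mulVec_sumElim]
    funext i
    simp only [Pi.add_apply, Matrix.neg_mulVec, Pi.neg_apply, Matrix.mulVec, dotProduct]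
    rw [← sub_eq_add_neg, ← Finset.sum_sub_distrib]
    congr 1; funext k
    rw [← mul_sub]
    congr 1
    rcases le_total (w k) 0 with h | h
    · rw [max_eq_right h, max_eq_left (neg_nonneg.mpr h)]; ring
    · rw [max_eq_left h, max_eq_right (neg_nonpos.mpr h)]; ring
  have hsum : ∑ j, p j = ηw * ∑ i, |w i| := by
    simp only [hp, Matrix.mulVec, dotProduct]
    rw [Finset.sum_comm]
    have : ∀ k, ∑ j, P j k * q k = ηw * q k := fun k => by
      rw [← Finset.sum_mul, ← hη k]
    rw [Finset.sum_congr rfl fun k _ => this k, ← Finset.mul_sum]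
    congr 1
    rw [hq, Fintype.sum_sum_type]
    simp only [Sum.elim_inl, Sum.elim_inr]
    rw [← Finset.sum_add_distrib]
    congr 1; funext i
    rcases le_total (w i) 0 with h | h
    · rw [max_eq_right h, max_eq_left (neg_nonneg.mpr h), abs_of_nonpos h]; ring
    · rw [max_eq_left h, max_eq_right (neg_nonpos.mpr h), abs_of_nonneg h]; ring
  have hmem : ηw * ∑ i, |w i| ∈
      {s : ℝ | ∃ p : Fin m → ℝ, (∀ j, 0 ≤ p j) ∧ V.mulVec p = B.mulVec w ∧ s = ∑ j, p j} :=
    ⟨p, hp0, hVp, hsum.symm⟩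
  exact csInf_le ⟨0, fun s ⟨p', hp', _, hs⟩ => hs ▸ Finset.sum_nonneg fun j _ => hp' j⟩ hmem
end

section
/- Let V be a real n×m matrix such that 0 lies in the interior of the convex hull of the columns of V, let A be a real n×n matrix, C a real n_z×n matrix, η_z > 0 a real number, and M a real m×m matrix whose off-diagonal entries are all nonnegative, such that A V = V M and 1ᵀM = −η_z · ẑ_V, where ẑ_V is the row vector whose j-th entry is |C V_j|₁ (V_j the j-th column of V). Then for every x ∈ ℝⁿ and every h ∈ ℝⁿ with hᵀx = ψ_V(x) and hᵀV ≤ 1ᵀ componentwise, it holds that hᵀA x ≤ −η_z · |C x|₁. -/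
open Matrix

/-!
Write `x = V p` with `p ≥ 0`; such representations exist because the cone spanned by the
columns of `V` contains a neighbourhood of `0`. Choose `k < 0` below the diagonal of `M`, so that
`M = Q + k I` with `Q ≥ 0`. Since `Vᵀh ≤ 1`, `hᵀA x = (Vᵀh)ᵀ M p ≤ 1ᵀQ p + k hᵀx
= 1ᵀM p + k (ψ_V(x) - 1ᵀp)`, and `1ᵀM p = -η_z ẑ_V p ≤ -η_z |C x|₁` by the triangle inequality.
The error term `-k (1ᵀp - ψ_V(x))` can be made arbitrarily small, as `ψ_V(x)` is the infimum
of `1ᵀp`.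
-/

theorem exists_nonneg_sum_smul_eq_of_zero_mem_interior_convexHull {E ι : Type*}
    [NormedAddCommGroup E] [NormedSpace ℝ E] [Fintype ι] {v : ι → E}
    (h0 : (0 : E) ∈ interior (convexHull ℝ (Set.range v))) (x : E) :
    ∃ p : ι → ℝ, 0 ≤ p ∧ ∑ i, p i • v i = x := by
  classical
  set K : Set E := {y | ∃ p : ι → ℝ, 0 ≤ p ∧ ∑ i, p i • v i = y}
  have hK_convex : Convex ℝ K := by
    rintro _ ⟨p, hp, rfl⟩ _ ⟨q, hq, rfl⟩ a b ha hb -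
    exact ⟨a • p + b • q, add_nonneg (smul_nonneg ha hp) (smul_nonneg hb hq),
      by simp [add_smul, smul_smul, Finset.sum_add_distrib, Finset.smul_sum]⟩
  have hv_mem : Set.range v ⊆ K := by
    rintro _ ⟨i, rfl⟩
    exact ⟨Pi.single i 1, Pi.single_nonneg.2 zero_le_one, by simp [Pi.single_apply]⟩
  -- `x` is a positive multiple of a point of the hull, which lies in the cone `K`.
  obtain ⟨r, hr, y, hy, rfl⟩ :=
    (absorbent_nhds_zero (mem_interior_iff_mem_nhds.1 h0)).gauge_set_nonempty (x := x)
  obtain ⟨p, hp, rfl⟩ := convexHull_min hv_mem hK_convex hy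
  exact ⟨r • p, smul_nonneg hr.le hp, by simp [Finset.smul_sum, smul_smul]⟩

theorem ZeroInInterior.exists_nonneg_mulVec_eq {n : ℕ} {m : Type*} [Fintype m]
    {V : Matrix (Fin n) m ℝ} (hV : ZeroInInterior V) (x : Fin n → ℝ) :
    ∃ p : m → ℝ, 0 ≤ p ∧ V *ᵥ p = x := by
  obtain ⟨p, hp, hpx⟩ := exists_nonneg_sum_smul_eq_of_zero_mem_interior_convexHull hV x
  exact ⟨p, hp, by rw [mulVec_eq_sum]; simp only [op_smul_eq_smul]; exact hpx⟩

theorem ZeroInInterior.nonpos_of_forall_le_mul_sub_psiV {n : ℕ} {m : Type*} [Fintype m]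
    {V : Matrix (Fin n) m ℝ} (hV : ZeroInInterior V) {x : Fin n → ℝ} {a c : ℝ} (hc : 0 < c)
    (h : ∀ p, 0 ≤ p → V *ᵥ p = x → a ≤ c * (∑ j, p j - psiV V x)) : a ≤ 0 := by
  obtain ⟨p₀, hp₀, hp₀x⟩ := hV.exists_nonneg_mulVec_eq x
  have : psiV V x + a / c ≤ psiV V x := le_csInf ⟨_, p₀, hp₀, hp₀x, rfl⟩ <| by
    rintro _ ⟨p, hp, hpx, rfl⟩
    rw [← le_sub_iff_add_le', div_le_iff₀' hc]
    exact h p hp hpx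
  simpa using (div_le_iff₀ hc).1 (by linarith : a / c ≤ 0)

theorem dotProduct_mulVec_le_of_offDiag_nonneg {m : Type*} [Fintype m] [DecidableEq m]
    {M : Matrix m m ℝ} (hM : ∀ a b, a ≠ b → 0 ≤ M a b) {k : ℝ} (hk : ∀ a, k ≤ M a a)
    {g p : m → ℝ} (hg : g ≤ 1) (hp : 0 ≤ p) :
    g ⬝ᵥ M *ᵥ p ≤ 1 ⬝ᵥ M *ᵥ p + k * (g ⬝ᵥ p - 1 ⬝ᵥ p) := by
  set Q := M - k • (1 : Matrix m m ℝ)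
  have hQ : 0 ≤ Q *ᵥ p := fun a => Finset.sum_nonneg fun b _ => by
    refine mul_nonneg ?_ (hp b)
    by_cases hab : a = b
    · subst hab; simpa [Q] using hk a
    · simpa [Q, hab] using hM a b hab
  have hsplit : ∀ w, w ⬝ᵥ M *ᵥ p = w ⬝ᵥ Q *ᵥ p + k * (w ⬝ᵥ p) := fun w => by
    simp [Q, sub_mulVec, smul_mulVec, dotProduct_sub, dotProduct_smul]
  have := dotProduct_le_dotProduct_of_nonneg_right hg hQ
  rw [hsplit g, hsplit 1]
  linarith

theorem sum_abs_mulVec_le {l m : Type*} [Fintype l] [Fintype m] (B : Matrix l m ℝ)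
    {p : m → ℝ} (hp : 0 ≤ p) :
    ∑ i, |(B *ᵥ p) i| ≤ ∑ j, (∑ i, |B i j|) * p j := by
  calc ∑ i, |(B *ᵥ p) i| ≤ ∑ i, ∑ j, |B i j| * p j := Finset.sum_le_sum fun i _ =>
        (Finset.abs_sum_le_sum_abs _ _).trans_eq <| by simp [abs_mul, abs_of_nonneg (hp _)]
    _ = ∑ j, (∑ i, |B i j|) * p j := by rw [Finset.sum_comm]; simp [Finset.sum_mul]

theorem dotProduct_mulVec_mulVec_add_le {ι κ m : Type*} [Fintype ι] [Fintype κ] [Fintype m]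
    [DecidableEq m] {V : Matrix ι m ℝ} {A : Matrix ι ι ℝ} {C : Matrix κ ι ℝ} {M : Matrix m m ℝ}
    {ηz k : ℝ} {h : ι → ℝ} {p : m → ℝ}
    (hM : ∀ a b, a ≠ b → 0 ≤ M a b) (hAV : A * V = V * M)
    (hsum : ∀ j, (∑ a, M a j) = -(ηz * ∑ l, |(C * V) l j|)) (hηz : 0 ≤ ηz)
    (hk : ∀ a, k ≤ M a a) (hhV : h ᵥ* V ≤ 1) (hp : 0 ≤ p) :
    h ⬝ᵥ A *ᵥ (V *ᵥ p) + ηz * ∑ l, |(C *ᵥ (V *ᵥ p)) l| ≤ k * (h ⬝ᵥ V *ᵥ p - ∑ j, p j) := by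
  have hAx : h ⬝ᵥ A *ᵥ (V *ᵥ p) = h ᵥ* V ⬝ᵥ M *ᵥ p := by
    rw [mulVec_mulVec, hAV, ← mulVec_mulVec, dotProduct_mulVec]
  have hcol : 1 ⬝ᵥ M *ᵥ p = -(ηz * ∑ j, (∑ l, |(C * V) l j|) * p j) := by
    rw [dotProduct_mulVec]
    simp [dotProduct, vecMul, hsum, Finset.mul_sum, Finset.sum_mul, mul_assoc]
  have htri := mul_le_mul_of_nonneg_left (sum_abs_mulVec_le (C * V) hp) hηz
  have hmetzler := dotProduct_mulVec_le_of_offDiag_nonneg hM hk hhV hp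
  rw [hAx, mulVec_mulVec, dotProduct_mulVec h V]
  rw [hcol, one_dotProduct] at hmetzler
  linarith

/-- State condition (9c): if `offdiag(M) ≥ 0`, `AV = VM`, `1ᵀM = −η_z ẑ_V`
(with `ẑ_V` the row vector of entries `|CV_j|₁`), then every subgradient
`h` of `ψ_V` at `x` satisfies `hᵀAx ≤ −η_z |Cx|₁`. -/
theorem psiV_state_bound {n m nz : ℕ} (V : Matrix (Fin n) (Fin m) ℝ)
    (hV : ZeroInInterior V)
    (A : Matrix (Fin n) (Fin n) ℝ) (C : Matrix (Fin nz) (Fin n) ℝ)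
    (ηz : ℝ) (hηz : 0 < ηz)
    (M : Matrix (Fin m) (Fin m) ℝ)
    (hM : ∀ a b, a ≠ b → 0 ≤ M a b)
    (hAV : A * V = V * M)
    (hsum : ∀ j, (∑ a, M a j) = -(ηz * ∑ l, |(C * V) l j|))
    (x h : Fin n → ℝ)
    (hx : h ⬝ᵥ x = psiV V x)
    (hhV : ∀ j, (∑ i, h i * V i j) ≤ 1) :
    h ⬝ᵥ A.mulVec x ≤ -(ηz * ∑ l, |C.mulVec x l|) := by
  obtain ⟨k, hk_neg, hk⟩ : ∃ k < 0, ∀ a, k ≤ M a a := by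
    obtain ⟨b, hb⟩ := (Set.finite_range M.diag).bddBelow
    exact ⟨min b (-1), by simp, fun a => (min_le_left _ _).trans (hb ⟨a, rfl⟩)⟩
  suffices h ⬝ᵥ A *ᵥ x + ηz * ∑ l, |(C *ᵥ x) l| ≤ 0 by linarith
  refine hV.nonpos_of_forall_le_mul_sub_psiV (x := x) (neg_pos.2 hk_neg) fun p hp hpx => ?_
  subst hpx
  have := dotProduct_mulVec_mulVec_add_le hM hAV hsum hηz.le hk hhV hp
  rw [hx] at this
  linarith
end

section
/- Let f : ℝⁿ → ℝⁿ be continuously differentiable and let A₁, …, A_k be real n×n matrices such that for every x ∈ ℝⁿ the Jacobian matrix ∂f(x) lies in the convex hull of {A₁, …, A_k}. Then for all x₁, x₂ ∈ ℝⁿ there exists a matrix M in the convex hull of {A₁, …, A_k} such that f(x₁) − f(x₂) = M (x₁ − x₂). -/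
open Matrix MeasureTheory

/-- Mean-value property: if the Jacobian of `f` lies everywhere in the convex
hull of `{A₁, …, A_k}`, then every increment `f(x₁) − f(x₂)` is realized by a
matrix from that convex hull applied to `x₁ − x₂`. -/
theorem increment_in_convexHull {n k : ℕ}
    (f : (Fin n → ℝ) → (Fin n → ℝ)) (hf : ContDiff ℝ 1 f)
    (A : Fin k → Matrix (Fin n) (Fin n) ℝ)
    (hJac : ∀ x : Fin n → ℝ, ∃ M ∈ convexHull ℝ (Set.range A),
      ∀ v : Fin n → ℝ, fderiv ℝ f x v = M.mulVec v)
    (x₁ x₂ : Fin n → ℝ) :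
    ∃ M ∈ convexHull ℝ (Set.range A), f x₁ - f x₂ = M.mulVec (x₁ - x₂) := by
  set w : Fin n → ℝ := x₁ - x₂ with hw
  -- the linear map `M ↦ M.mulVec w`
  set L : Matrix (Fin n) (Fin n) ℝ →ₗ[ℝ] (Fin n → ℝ) :=
    { toFun := fun M => M.mulVec w
      map_add' := fun M N => Matrix.add_mulVec M N w
      map_smul' := fun c M => Matrix.smul_mulVec c M w } with hL
  set S : Set (Fin n → ℝ) := L '' (convexHull ℝ (Set.range A)) with hS
  have hShull : S = convexHull ℝ (L '' Set.range A) := L.image_convexHull _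
  have hSconv : Convex ℝ S := by
    rw [hShull]; exact convex_convexHull ℝ _
  have hSclosed : IsClosed S := by
    rw [hShull]
    exact (Set.Finite.isCompact_convexHull (𝕜 := ℝ) ((Set.finite_range A).image _)).isClosed
  -- the path
  set γ : ℝ → (Fin n → ℝ) := fun t => x₂ + t • w with hγ
  have hγcont : Continuous γ := by fun_prop
  set g' : ℝ → (Fin n → ℝ) := fun t => fderiv ℝ f (γ t) w with hg'
  have hderiv : ∀ t : ℝ, HasDerivAt (fun t => f (γ t)) (g' t) t := by
    intro t
    have h1 : HasDerivAt γ w t := by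
      have : HasDerivAt (fun t : ℝ => t • w) ((1 : ℝ) • w) t :=
        (hasDerivAt_id t).smul_const w
      simpa [hγ] using this.const_add x₂
    have h2 : HasFDerivAt f (fderiv ℝ f (γ t)) (γ t) :=
      (hf.differentiable one_ne_zero (γ t)).hasFDerivAt
    exact h2.comp_hasDerivAt t h1
  have hg'cont : Continuous g' := by
    have hcf : Continuous (fderiv ℝ f) := hf.continuous_fderiv one_ne_zero
    exact (hcf.comp hγcont).clm_apply continuous_const
  have hftc : f x₁ - f x₂ = ∫ t in (0:ℝ)..1, g' t := by
    have := intervalIntegral.integral_eq_sub_of_hasDerivAt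
      (f := fun t => f (γ t)) (f' := g')
      (fun t _ => hderiv t) (hg'cont.intervalIntegrable 0 1)
    rw [this]
    simp [hγ, hw]
  have hioc : (∫ t in (0:ℝ)..1, g' t) = ∫ t, g' t ∂(volume.restrict (Set.Ioc (0:ℝ) 1)) := by
    rw [intervalIntegral.integral_of_le zero_le_one]
  haveI : IsProbabilityMeasure (volume.restrict (Set.Ioc (0:ℝ) 1)) :=
    ⟨by simp⟩
  have hmem : (∫ t, g' t ∂(volume.restrict (Set.Ioc (0:ℝ) 1))) ∈ S := by
    apply hSconv.integral_mem hSclosed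
    · filter_upwards with t
      obtain ⟨M, hM, hMeq⟩ := hJac (γ t)
      exact ⟨M, hM, (hMeq w).symm⟩
    · exact hg'cont.integrableOn_Ioc
  rw [hftc, hioc]
  obtain ⟨M, hM, hMeq⟩ := hmem
  exact ⟨M, hM, hMeq.symm⟩
end

section
/- (Theorem 1, dissipation-inequality form.) Let f : ℝⁿ → ℝⁿ be continuously differentiable and let A₁, …, A_k be real n×n matrices such that ∂f(x) lies in the convex hull of {A₁, …, A_k} for every x. Let B be a real n×n_w matrix, C a real n_z×n matrix, and let V ∈ ℝ^{n×m} (with 0 in the interior of the convex hull of its columns), η_w ∈ ℝ, η_z > 0, P ∈ ℝ^{m×2n_w}, and M₁, …, M_k ∈ ℝ^{m×m} satisfy: (i) P ≥ 0 componentwise, [B, −B] = V P, η_w·1ᵀ = 1ᵀP; (ii) for each i, the off-diagonal entries of M_i are nonnegative, A_i V = V M_i, and 1ᵀM_i = −η_z · ẑ_V, where ẑ_V is the row vector whose j-th entry is |C V_j|₁. Then for all x₁, x₂ ∈ ℝⁿ, all w ∈ ℝ^{n_w}, and every h ∈ ℝⁿ with hᵀ(x₁ − x₂) = ψ_V(x₁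 − x₂) and hᵀV ≤ 1ᵀ componentwise, it holds that hᵀ( f(x₁) − f(x₂) + B w ) ≤ −η_z · |C (x₁ − x₂)|₁ + η_w · |w|₁. -/
open Matrix

lemma feas {n m : ℕ} (V : Matrix (Fin n) (Fin m) ℝ)
    (hV : ZeroInInterior V)
    (d : Fin n → ℝ) : ∃ p : Fin m → ℝ, (∀ j, 0 ≤ p j) ∧ V.mulVec p = d := by
  by_cases hd : d = 0
  · exact ⟨0, fun j => le_rfl, by simp [hd]⟩
  obtain ⟨ε, hε, hball⟩ := Metric.mem_nhds_iff.mp (mem_interior_iff_mem_nhds.mp hV)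
  have hdn : 0 < ‖d‖ := norm_pos_iff.mpr hd
  set c : ℝ := ε / (2 * ‖d‖) with hcdef
  have hc : 0 < c := by positivity
  have hy : c • d ∈ Metric.ball (0 : Fin n → ℝ) ε := by
    rw [Metric.mem_ball, dist_zero_right, norm_smul, Real.norm_eq_abs, abs_of_pos hc, hcdef]
    rw [div_mul_eq_mul_div, mul_comm (2 : ℝ) ‖d‖, ← div_div, mul_div_assoc]
    rw [div_self (ne_of_gt hdn), mul_one]
    linarith
  have hmem := hball hy
  rw [convexHull_eq] at hmem
  obtain ⟨ι, t, wt, z, hw0, hw1, hz, hcm⟩ := hmem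
  have hz' : ∀ i : {x // x ∈ t}, ∃ j : Fin m, (fun r => V r j) = z i :=
    fun i => hz i i.2
  choose J hJ using hz'
  classical
  set q : Fin m → ℝ := fun a => ∑ i ∈ t.attach.filter (fun i => J i = a), wt i with hqdef
  have hq0 : ∀ a, 0 ≤ q a := by
    intro a
    exact Finset.sum_nonneg fun i hi => hw0 i i.2
  have hcm' : ∑ i ∈ t, wt i • z i = c • d := by
    rw [Finset.centerMass, hw1] at hcm
    simpa using hcm
  have hVq : V.mulVec q = c • d := by
    funext r
    rw [← hcm']
    simp only [mulVec, dotProduct, hqdef]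
    have key : ∀ a : Fin m, V r a * ∑ i ∈ t.attach.filter (fun i => J i = a), wt i
        = ∑ i ∈ t.attach.filter (fun i => J i = a), wt i * z i r := by
      intro a
      rw [Finset.mul_sum]
      refine Finset.sum_congr rfl fun i hi => ?_
      have hia : J i = a := (Finset.mem_filter.mp hi).2
      rw [← hia, mul_comm, congrFun (hJ i) r]
    simp_rw [key]
    rw [Finset.sum_fiberwise_of_maps_to (fun i _ => Finset.mem_univ (J i))
      (fun i => wt i * z i r)]
    rw [Finset.sum_apply, ← Finset.sum_attach t (fun i => (wt i • z i) r)]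
    simp
  refine ⟨c⁻¹ • q, fun j => ?_,
    by rw [Matrix.mulVec_smul, hVq, smul_smul, inv_mul_cancel₀ (ne_of_gt hc), one_smul]⟩
  have := hq0 j
  have : 0 ≤ c⁻¹ * q j := by positivity
  simpa using this

lemma mvt_bound {g g' : ℝ → ℝ} {r : ℝ} (hg : ∀ t, HasDerivAt g (g' t) t)
    (hb : ∀ t, g' t ≤ r) : g 1 ≤ g 0 + r := by
  have hG : ∀ t : ℝ, HasDerivAt (fun t => r * t - g t) (r - g' t) t := by
    intro t
    exact (((hasDerivAt_id' t).const_mul r).sub (hg t)).congr_deriv (by ring)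
  have hmono : Monotone (fun t => r * t - g t) := by
    apply monotone_of_deriv_nonneg (fun t => (hG t).differentiableAt)
    intro t
    rw [(hG t).deriv]
    linarith [hb t]
  have := hmono (by norm_num : (0:ℝ) ≤ 1)
  simp only [mul_one, mul_zero, zero_sub] at this
  linarith

/-- Theorem 1 (dissipation-inequality form): under the L₁ feasibility
conditions (9b)–(9c), every subgradient `h` of `ψ_V` at `x₁ − x₂` satisfies
`hᵀ(f(x₁) − f(x₂) + Bw) ≤ −η_z |C(x₁ − x₂)|₁ + η_w |w|₁`. -/
theorem incr_L1_dissipation {n m nw nz k : ℕ}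
    (f : (Fin n → ℝ) → (Fin n → ℝ)) (hf : ContDiff ℝ 1 f)
    (A : Fin k → Matrix (Fin n) (Fin n) ℝ)
    (hJac : ∀ x : Fin n → ℝ, ∃ M ∈ convexHull ℝ (Set.range A),
      ∀ v : Fin n → ℝ, fderiv ℝ f x v = M.mulVec v)
    (B : Matrix (Fin n) (Fin nw) ℝ) (C : Matrix (Fin nz) (Fin n) ℝ)
    (V : Matrix (Fin n) (Fin m) ℝ) (hV : ZeroInInterior V)
    (ηw ηz : ℝ) (hηz : 0 < ηz)
    (P : Matrix (Fin m) (Fin nw ⊕ Fin nw) ℝ)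
    (hP : ∀ i j, 0 ≤ P i j)
    (hBP : Matrix.fromCols B (-B) = V * P)
    (hPsum : ∀ j, ηw = ∑ i, P i j)
    (M : Fin k → Matrix (Fin m) (Fin m) ℝ)
    (hMoff : ∀ i, ∀ a b, a ≠ b → 0 ≤ M i a b)
    (hAV : ∀ i, A i * V = V * M i)
    (hMsum : ∀ i j, (∑ a, M i a j) = -(ηz * ∑ l, |(C * V) l j|))
    (x₁ x₂ : Fin n → ℝ) (w : Fin nw → ℝ) (h : Fin n → ℝ)
    (hx : h ⬝ᵥ (x₁ - x₂) = psiV V (x₁ - x₂))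
    (hhV : ∀ j, (∑ i, h i * V i j) ≤ 1) :
    h ⬝ᵥ (f x₁ - f x₂ + B.mulVec w) ≤
      -(ηz * ∑ l, |C.mulVec (x₁ - x₂) l|) + ηw * ∑ i, |w i| := by
  unfold psiV at hx
  classical
  set d : Fin n → ℝ := x₁ - x₂ with hddef
  set Z : ℝ := ηz * ∑ l, |C.mulVec d l| with hZdef
  set S : Set ℝ := {s : ℝ | ∃ p : Fin m → ℝ, (∀ j, 0 ≤ p j) ∧ V.mulVec p = d ∧ s = ∑ j, p j}
    with hSdef
  obtain ⟨p₀, hp₀pos, hp₀eq⟩ := feas V hV d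
  have hSne : S.Nonempty := ⟨∑ j, p₀ j, p₀, hp₀pos, hp₀eq, rfl⟩
  -- the constant c
  set c : ℝ := 1 + ∑ i, ∑ a, |M i a a| with hcdef
  have hc : 0 < c := by
    have : 0 ≤ ∑ i, ∑ a, |M i a a| :=
      Finset.sum_nonneg fun i _ => Finset.sum_nonneg fun a _ => abs_nonneg _
    linarith
  have hMc : ∀ i a, 0 ≤ M i a a + c := by
    intro i a
    have h1 : |M i a a| ≤ ∑ i, ∑ a, |M i a a| := by
      calc |M i a a| ≤ ∑ a, |M i a a| :=
            Finset.single_le_sum (fun b _ => abs_nonneg (M i b b)) (Finset.mem_univ a)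
        _ ≤ ∑ i, ∑ a, |M i a a| :=
            Finset.single_le_sum (f := fun i => ∑ a, |M i a a|)
              (fun b _ => Finset.sum_nonneg fun a _ => abs_nonneg _) (Finset.mem_univ i)
    have := abs_le.mp (le_trans (le_refl _) (le_refl |M i a a|))
    have h2 : -(M i a a) ≤ |M i a a| := neg_le_abs _
    linarith
  -- vecMul h V
  set hv : Fin m → ℝ := fun j => ∑ r, h r * V r j with hhvdef
  -- Step 1: per-vertex bound
  have hAi : ∀ i : Fin k, h ⬝ᵥ (A i).mulVec d ≤ -Z := by
    intro i
    have hlb : ∀ s ∈ S, (h ⬝ᵥ (A i).mulVec d + Z + c * (h ⬝ᵥ d)) / c ≤ s := by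
      rintro s ⟨p, hp0, hVp, rfl⟩
      rw [div_le_iff₀ hc]
      -- key computations
      have e1 : h ⬝ᵥ (A i).mulVec d = hv ⬝ᵥ (M i).mulVec p := by
        rw [← hVp, Matrix.mulVec_mulVec, hAV i, ← Matrix.mulVec_mulVec,
          Matrix.dotProduct_mulVec]
        congr 1
      have e2 : hv ⬝ᵥ p = h ⬝ᵥ d := by
        rw [← hVp, Matrix.dotProduct_mulVec]
        congr 1
      -- u := M i *ᵥ p + c • p is nonneg
      have hu : ∀ a, 0 ≤ ((M i).mulVec p) a + c * p a := by
        intro a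
        have : ((M i).mulVec p) a = ∑ b, M i a b * p b := rfl
        rw [this]
        have hsplit : ∑ b, M i a b * p b
            = M i a a * p a + ∑ b ∈ Finset.univ.erase a, M i a b * p b := by
          exact (Finset.add_sum_erase _ _ (Finset.mem_univ a)).symm
        rw [hsplit]
        have h1 : 0 ≤ ∑ b ∈ Finset.univ.erase a, M i a b * p b :=
          Finset.sum_nonneg fun b hb =>
            mul_nonneg (hMoff i a b (Ne.symm (Finset.mem_erase.mp hb).1)) (hp0 b)
        nlinarith [hMc i a, hp0 a]
      -- bound hv ⬝ᵥ (M i *ᵥ p)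
      have e3 : hv ⬝ᵥ (M i).mulVec p
          ≤ (∑ a, (((M i).mulVec p) a + c * p a)) - c * (h ⬝ᵥ d) := by
        have hb : ∀ a, hv a * (((M i).mulVec p) a + c * p a) ≤ ((M i).mulVec p) a + c * p a := by
          intro a
          exact mul_le_of_le_one_left (hu a) (hhV a)
        have hsum : hv ⬝ᵥ ((M i).mulVec p) + c * (hv ⬝ᵥ p)
            = ∑ a, hv a * (((M i).mulVec p) a + c * p a) := by
          simp only [dotProduct, Finset.mul_sum, ← Finset.sum_add_distrib]
          exact Finset.sum_congr rfl fun a _ => by ring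
        have : ∑ a, hv a * (((M i).mulVec p) a + c * p a)
            ≤ ∑ a, (((M i).mulVec p) a + c * p a) :=
          Finset.sum_le_sum fun a _ => hb a
        calc hv ⬝ᵥ (M i).mulVec p
            = (∑ a, hv a * (((M i).mulVec p) a + c * p a)) - c * (hv ⬝ᵥ p) := by
              rw [← hsum]; ring
          _ ≤ (∑ a, (((M i).mulVec p) a + c * p a)) - c * (hv ⬝ᵥ p) := by linarith
          _ = (∑ a, (((M i).mulVec p) a + c * p a)) - c * (h ⬝ᵥ d) := by rw [e2]
      -- compute the sum
      have e4 : ∑ a, (((M i).mulVec p) a + c * p a)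
          = -(ηz * ∑ b, (∑ l, |(C * V) l b|) * p b) + c * ∑ b, p b := by
        rw [Finset.sum_add_distrib, ← Finset.mul_sum]
        congr 1
        have : ∑ a, ((M i).mulVec p) a = ∑ b, (∑ a, M i a b) * p b := by
          simp only [mulVec, dotProduct]
          rw [Finset.sum_comm]
          congr 1; funext b; rw [← Finset.sum_mul]
        rw [this]
        have : ∀ b, (∑ a, M i a b) * p b = -(ηz * ((∑ l, |(C * V) l b|) * p b)) := by
          intro b; rw [hMsum i b]; ring
        simp_rw [this]
        rw [Finset.mul_sum, ← Finset.sum_neg_distrib]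
      -- triangle inequality
      have e5 : ∑ l, |C.mulVec d l| ≤ ∑ b, (∑ l, |(C * V) l b|) * p b := by
        have hCd : ∀ l, C.mulVec d l = ∑ b, (C * V) l b * p b := by
          intro l
          rw [← hVp, Matrix.mulVec_mulVec]
          rfl
        calc ∑ l, |C.mulVec d l| = ∑ l, |∑ b, (C * V) l b * p b| := by simp_rw [hCd]
          _ ≤ ∑ l, ∑ b, |(C * V) l b * p b| :=
              Finset.sum_le_sum fun l _ => Finset.abs_sum_le_sum_abs _ _
          _ = ∑ b, (∑ l, |(C * V) l b|) * p b := by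
              rw [Finset.sum_comm]
              congr 1; funext b
              rw [Finset.sum_mul]
              congr 1; funext l
              rw [abs_mul, abs_of_nonneg (hp0 b)]
      have e6 : -(ηz * ∑ b, (∑ l, |(C * V) l b|) * p b) ≤ -Z := by
        rw [hZdef, neg_le_neg_iff]
        exact mul_le_mul_of_nonneg_left e5 (le_of_lt hηz)
      rw [e1]
      calc hv ⬝ᵥ (M i).mulVec p + Z + c * (h ⬝ᵥ d)
          ≤ ((∑ a, (((M i).mulVec p) a + c * p a)) - c * (h ⬝ᵥ d)) + Z + c * (h ⬝ᵥ d) := by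
            linarith [e3]
        _ = (-(ηz * ∑ b, (∑ l, |(C * V) l b|) * p b) + c * ∑ b, p b) + Z := by rw [e4]; ring
        _ ≤ (-Z + c * ∑ b, p b) + Z := by linarith [e6]
        _ = (∑ j, p j) * c := by ring
    have hle : (h ⬝ᵥ (A i).mulVec d + Z + c * (h ⬝ᵥ d)) / c ≤ h ⬝ᵥ d :=
      le_trans (le_csInf hSne hlb) (le_of_eq hx.symm)
    rw [div_le_iff₀ hc] at hle
    nlinarith
  -- Step 2: convex hull bound
  have hhull : ∀ N ∈ convexHull ℝ (Set.range A), h ⬝ᵥ N.mulVec d ≤ -Z := by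
    intro N hN
    have hlin : IsLinearMap ℝ (fun N : Matrix (Fin n) (Fin n) ℝ => h ⬝ᵥ N.mulVec d) := by
      constructor
      · intro N₁ N₂; rw [Matrix.add_mulVec, dotProduct_add]
      · intro r N₁; rw [Matrix.smul_mulVec, dotProduct_smul, smul_eq_mul]
    have hconv : Convex ℝ {N : Matrix (Fin n) (Fin n) ℝ | h ⬝ᵥ N.mulVec d ≤ -Z} :=
      convex_halfSpace_le hlin _
    exact convexHull_min (by rintro _ ⟨i, rfl⟩; exact hAi i) hconv hN
  -- Step 3: derivative bound everywhere
  have hdb : ∀ x : Fin n → ℝ, h ⬝ᵥ (fderiv ℝ f x d) ≤ -Z := by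
    intro x
    obtain ⟨N, hN, hNe⟩ := hJac x
    rw [hNe d]
    exact hhull N hN
  -- Step 4: MVT
  have hder : ∀ t : ℝ, HasDerivAt (fun t => h ⬝ᵥ f (x₂ + t • d))
      (h ⬝ᵥ (fderiv ℝ f (x₂ + t • d) d)) t := by
    intro t
    have h1 : HasDerivAt (fun t : ℝ => x₂ + t • d) d t := by
      simpa using ((hasDerivAt_id t).smul_const d).const_add x₂
    have h2 : HasDerivAt (fun t : ℝ => f (x₂ + t • d)) (fderiv ℝ f (x₂ + t • d) d) t :=
      ((hf.differentiable one_ne_zero) (x₂ + t • d)).hasFDerivAt.comp_hasDerivAt t h1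
    have h3 : ∀ a : Fin n, HasDerivAt (fun t : ℝ => f (x₂ + t • d) a)
        ((fderiv ℝ f (x₂ + t • d) d) a) t := fun a => by
      exact (ContinuousLinearMap.proj (R := ℝ) (φ := fun _ : Fin n => ℝ)
        a).hasFDerivAt.comp_hasDerivAt t h2
    have h4 := HasDerivAt.fun_sum (fun a (_ : a ∈ Finset.univ) => ((h3 a).const_mul (h a)))
    simpa [dotProduct] using h4
  have hmvt : h ⬝ᵥ f x₁ ≤ h ⬝ᵥ f x₂ + (-Z) := by
    have := mvt_bound hder (fun t => hdb (x₂ + t • d))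
    have e0 : x₂ + (0:ℝ) • d = x₂ := by simp
    have e1 : x₂ + (1:ℝ) • d = x₁ := by
      rw [one_smul, hddef]; abel
    rw [e0, e1] at this
    exact this
  -- Step 5: input term
  have hBw : h ⬝ᵥ B.mulVec w ≤ ηw * ∑ i, |w i| := by
    set q : Fin nw ⊕ Fin nw → ℝ := Sum.elim (fun i => max (w i) 0) (fun i => max (-w i) 0)
      with hqdef
    have hq0 : ∀ j, 0 ≤ q j := by rintro (j | j) <;> simp [hqdef, le_max_right]
    have hBq : B.mulVec w = (Matrix.fromCols B (-B)).mulVec q := by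
      funext r
      simp only [mulVec, dotProduct, Fintype.sum_sum_type, hqdef,
        Matrix.fromCols_apply_inl, Matrix.fromCols_apply_inr, Sum.elim_inl, Sum.elim_inr,
        Matrix.neg_apply]
      rw [← Finset.sum_add_distrib]
      congr 1; funext i
      linear_combination (B r i) * (max_zero_sub_max_neg_zero_eq_self (w i)).symm
    rw [hBq, hBP, ← Matrix.mulVec_mulVec, Matrix.dotProduct_mulVec]
    have hPq0 : ∀ j, 0 ≤ (P.mulVec q) j := by
      intro j
      simp only [Matrix.mulVec, dotProduct]
      exact Finset.sum_nonneg fun b _ => mul_nonneg (hP j b) (hq0 b)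
    calc Matrix.vecMul h V ⬝ᵥ P.mulVec q
        ≤ ∑ j, (P.mulVec q) j := by
          simp only [dotProduct]
          refine Finset.sum_le_sum fun j _ => ?_
          have h1 : Matrix.vecMul h V j ≤ 1 := by
            simpa [Matrix.vecMul, dotProduct] using hhV j
          exact mul_le_of_le_one_left (hPq0 j) h1
      _ = ∑ b, (∑ j, P j b) * q b := by
          simp only [mulVec, dotProduct]
          rw [Finset.sum_comm]
          congr 1; funext b; rw [← Finset.sum_mul]
      _ = ηw * ∑ b, q b := by
          simp_rw [fun b => (hPsum b).symm]
          rw [← Finset.mul_sum]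
      _ = ηw * ∑ i, |w i| := by
          congr 1
          rw [Fintype.sum_sum_type]
          simp only [hqdef, Sum.elim_inl, Sum.elim_inr]
          rw [← Finset.sum_add_distrib]
          congr 1; funext i
          exact max_zero_add_max_neg_zero_eq_abs_self (w i)
  -- conclude
  have expand : h ⬝ᵥ (f x₁ - f x₂ + B.mulVec w)
      = h ⬝ᵥ f x₁ - h ⬝ᵥ f x₂ + h ⬝ᵥ B.mulVec w := by
    rw [dotProduct_add, dotProduct_sub]
  rw [expand]
  have : -(ηz * ∑ l, |C.mulVec (x₁ - x₂) l|) = -Z := by rw [hZdef]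
  rw [this]
  linarith
end

section
/- Let H be a real m×n matrix, A a real n×n matrix, B a real n×n_w matrix, η_w > 0 a real number, and M a real m×m matrix whose off-diagonal entries are all nonnegative, such that H A = M H and M 1 = −η_w · ŵ_H, where ŵ_H is the column vector whose j-th entry is |Bᵀ(H^j)ᵀ|₁ (H^j the j-th row of H). Then for every index j ∈ {1, …, m} and every x ∈ ℝⁿ with H x ≤ 1 componentwise and H^j x = 1, it holds that H^j A x ≤ −η_w · |Bᵀ(H^j)ᵀ|₁. -/
open Matrix

theorem mulVec_apply_le_sum_row_of_le_one {ι R : Type*} [Fintype ι] [Semiring R] [PartialOrder R]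
    [IsOrderedRing R] {M : Matrix ι ι R} {y : ι → R} (j : ι)
    (hM : ∀ a, a ≠ j → 0 ≤ M j a) (hy : ∀ a, y a ≤ 1) (hyj : y j = 1) :
    (M *ᵥ y) j ≤ ∑ a, M j a := by
  refine Finset.sum_le_sum fun a _ => ?_
  rcases eq_or_ne a j with rfl | ha
  · rw [hyj, mul_one]
  · exact mul_le_of_le_one_right (hM a ha) (hy a)

theorem flow_condition_general {m n nw : ℕ} (H : Matrix (Fin m) (Fin n) ℝ)
    (A : Matrix (Fin n) (Fin n) ℝ) (B : Matrix (Fin n) (Fin nw) ℝ)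
    (ηw : ℝ)
    (M : Matrix (Fin m) (Fin m) ℝ)
    (hM : ∀ a b, a ≠ b → 0 ≤ M a b)
    (hHA : H * A = M * H)
    (hM1 : ∀ j, (∑ a, M j a) = -(ηw * ∑ l, |(H * B) j l|))
    (j : Fin m) (x : Fin n → ℝ)
    (hx : ∀ i, H.mulVec x i ≤ 1) (hxj : H.mulVec x j = 1) :
    (H * A).mulVec x j ≤ -(ηw * ∑ l, |(H * B) j l|) := by
  rw [hHA, ← mulVec_mulVec, ← hM1 j]
  exact mulVec_apply_le_sum_row_of_le_one j (fun a ha => hM j a ha.symm) hx hxj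

/-- Flow condition (10b): if `offdiag(M) ≥ 0`, `HA = MH`, and
`M1 = −η_w ŵ_H` (where `ŵ_H` has entries `|Bᵀ(H^j)ᵀ|₁`), then on the face
`{x : Hx ≤ 1, H^j x = 1}` of the polyhedron `{x : Hx ≤ 1}` one has
`H^j A x ≤ −η_w |Bᵀ(H^j)ᵀ|₁`. -/
theorem flow_condition {m n nw : ℕ} (H : Matrix (Fin m) (Fin n) ℝ)
    (A : Matrix (Fin n) (Fin n) ℝ) (B : Matrix (Fin n) (Fin nw) ℝ)
    (ηw : ℝ) (hηw : 0 < ηw)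
    (M : Matrix (Fin m) (Fin m) ℝ)
    (hM : ∀ a b, a ≠ b → 0 ≤ M a b)
    (hHA : H * A = M * H)
    (hM1 : ∀ j, (∑ a, M j a) = -(ηw * ∑ l, |(H * B) j l|))
    (j : Fin m) (x : Fin n → ℝ)
    (hx : ∀ i, H.mulVec x i ≤ 1) (hxj : H.mulVec x j = 1) :
    (H * A).mulVec x j ≤ -(ηw * ∑ l, |(H * B) j l|) :=
  flow_condition_general H A B ηw M hM hHA hM1 j x hx hxj
end

section
/- (Theorem 2, flow-condition form.) Let f : ℝⁿ → ℝⁿ be continuously differentiable and let A₁, …, A_k be real n×n matrices such that ∂f(x) lies in the convex hull of {A₁, …, A_k} for every x. Let B be a real n×n_w matrix, H a real m×n matrix, η_w > 0, and M₁, …, M_k real m×m matrices such that for each i: the off-diagonal entries of M_i are nonnegative, H A_i = M_i H, and M_i 1 = −η_w · ŵ_H, where ŵ_H is the column vector whose j-th entry is |Bᵀ(H^j)ᵀ|₁. Then for every index j ∈ {1, …, m}, all x₁, x₂ ∈ ℝⁿ with H(x₁ − x₂) ≤ 1 componentwise and H^j(x₁ − x₂) = 1, and every w ∈ ℝ^{n_w}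 with |w|_∞ ≤ η_w, it holds that H^j ( f(x₁) − f(x₂) + B w ) ≤ 0. -/
open Matrix

/-- Theorem 2 (flow-condition form): under the L∞ feasibility conditions
(10b), the incremental vector field `f(x₁) − f(x₂) + Bw` points inward on the
boundary of the polyhedral set `{x : Hx ≤ 1}`, for all disturbances with
`|w|_∞ ≤ η_w`. -/
theorem incr_Linfty_flow {n m nw k : ℕ}
    (f : (Fin n → ℝ) → (Fin n → ℝ)) (hf : ContDiff ℝ 1 f)
    (A : Fin k → Matrix (Fin n) (Fin n) ℝ)
    (hJac : ∀ x : Fin n → ℝ, ∃ M ∈ convexHull ℝ (Set.range A),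
      ∀ v : Fin n → ℝ, fderiv ℝ f x v = M.mulVec v)
    (B : Matrix (Fin n) (Fin nw) ℝ) (H : Matrix (Fin m) (Fin n) ℝ)
    (ηw : ℝ) (hηw : 0 < ηw)
    (M : Fin k → Matrix (Fin m) (Fin m) ℝ)
    (hMoff : ∀ i, ∀ a b, a ≠ b → 0 ≤ M i a b)
    (hHA : ∀ i, H * A i = M i * H)
    (hM1 : ∀ i j, (∑ a, M i j a) = -(ηw * ∑ l, |(H * B) j l|))
    (j : Fin m) (x₁ x₂ : Fin n → ℝ)
    (hx : ∀ i, H.mulVec (x₁ - x₂) i ≤ 1)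
    (hxj : H.mulVec (x₁ - x₂) j = 1)
    (w : Fin nw → ℝ) (hw : ∀ i, |w i| ≤ ηw) :
    H.mulVec (f x₁ - f x₂ + B.mulVec w) j ≤ 0 := by
  set d : Fin n → ℝ := x₁ - x₂ with hd
  set c : ℝ := -(ηw * ∑ l, |(H * B) j l|) with hc
  have hdiff : Differentiable ℝ f := hf.differentiable one_ne_zero
  -- linear functional y ↦ (H.mulVec y) j as a continuous linear map
  set π : (Fin n → ℝ) →L[ℝ] ℝ :=
    LinearMap.toContinuousLinearMap ((LinearMap.proj j).comp H.mulVecLin) with hπdef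
  have hπ : ∀ y : Fin n → ℝ, π y = H.mulVec y j := fun y => rfl
  -- key bound for each vertex
  have hvert : ∀ i : Fin k, ((H * A i).mulVec d) j ≤ c := by
    intro i
    rw [hHA i, ← Matrix.mulVec_mulVec]
    have h1 : (M i).mulVec (H.mulVec d) j = ∑ a, M i j a * H.mulVec d a := rfl
    rw [h1, hc, ← hM1 i j]
    apply Finset.sum_le_sum
    intro a _
    by_cases haj : a = j
    · subst haj; rw [hxj]; simp
    · calc M i j a * H.mulVec d a ≤ M i j a * 1 :=
            mul_le_mul_of_nonneg_left (hx a) (hMoff i j a (Ne.symm haj))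
        _ = M i j a := mul_one _
  -- bound extends to the convex hull
  have hlin : IsLinearMap ℝ (fun N : Matrix (Fin n) (Fin n) ℝ => ((H * N).mulVec d) j) := by
    constructor
    · intro N₁ N₂; simp [Matrix.mul_add, Matrix.add_mulVec]
    · intro a N; simp [Matrix.mul_smul, Matrix.smul_mulVec]
  have hhull : ∀ N ∈ convexHull ℝ (Set.range A), ((H * N).mulVec d) j ≤ c := fun N hN =>
    convexHull_min (by rintro _ ⟨i, rfl⟩; exact hvert i) (convex_halfSpace_le hlin c) hN
  -- scalar function along the segment
  set γ : ℝ → (Fin n → ℝ) := fun t => x₂ + t • d with hγ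
  set g : ℝ → ℝ := fun t => π (f (γ t)) - c * t with hg
  have hγd : ∀ t : ℝ, HasDerivAt γ d t := by
    intro t
    have h1 : HasDerivAt (fun t : ℝ => t • d) ((1 : ℝ) • d) t :=
      (hasDerivAt_id t).smul_const d
    simpa [γ] using h1.const_add x₂
  have hder : ∀ t : ℝ, HasDerivAt g (π (fderiv ℝ f (γ t) d) - c) t := by
    intro t
    have hcomp : HasDerivAt (fun t => f (γ t)) (fderiv ℝ f (γ t) d) t :=
      (hdiff (γ t)).hasFDerivAt.comp_hasDerivAt t (hγd t)
    have h2 : HasDerivAt (fun t => π (f (γ t))) (π (fderiv ℝ f (γ t) d)) t :=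
      (π.hasFDerivAt).comp_hasDerivAt t hcomp
    exact (h2.sub ((hasDerivAt_id' t).const_mul c)).congr_deriv (by simp)
  have hder_nonpos : ∀ t : ℝ, π (fderiv ℝ f (γ t) d) - c ≤ 0 := by
    intro t
    obtain ⟨N, hN, hNv⟩ := hJac (γ t)
    have : π (fderiv ℝ f (γ t) d) = ((H * N).mulVec d) j := by
      rw [hπ, hNv d, ← Matrix.mulVec_mulVec]
    rw [this]
    linarith [hhull N hN]
  -- g is antitone on ℝ
  have hanti : AntitoneOn g Set.univ := by
    apply antitoneOn_of_deriv_nonpos convex_univ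
    · exact (fun t _ => (hder t).differentiableAt.continuousAt.continuousWithinAt)
    · intro t ht
      exact (hder t).differentiableAt.differentiableWithinAt
    · intro t _
      rw [(hder t).deriv]
      exact hder_nonpos t
  have h01 : g 1 ≤ g 0 := hanti (Set.mem_univ 0) (Set.mem_univ 1) zero_le_one
  have hγ0 : γ 0 = x₂ := by simp [hγ]
  have hγ1 : γ 1 = x₁ := by
    funext a; simp [hγ, hd]
  -- unpack g values
  have hfin : π (f x₁) - π (f x₂) ≤ c := by
    have : π (f x₁) - c * 1 ≤ π (f x₂) - c * 0 := by
      simpa [hγ0, hγ1, hg] using h01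
    linarith
  -- disturbance bound
  have hBw : H.mulVec (B.mulVec w) j ≤ ηw * ∑ l, |(H * B) j l| := by
    rw [Matrix.mulVec_mulVec]
    have h1 : (H * B).mulVec w j = ∑ l, (H * B) j l * w l := rfl
    rw [h1, Finset.mul_sum]
    apply Finset.sum_le_sum
    intro l _
    calc (H * B) j l * w l ≤ |(H * B) j l * w l| := le_abs_self _
      _ = |(H * B) j l| * |w l| := abs_mul _ _
      _ ≤ |(H * B) j l| * ηw := mul_le_mul_of_nonneg_left (hw l) (abs_nonneg _)
      _ = ηw * |(H * B) j l| := mul_comm _ _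
  have hsplit : H.mulVec (f x₁ - f x₂ + B.mulVec w) j
      = (π (f x₁) - π (f x₂)) + H.mulVec (B.mulVec w) j := by
    simp [hπ, Matrix.mulVec_add, Matrix.mulVec_sub]
  rw [hsplit]
  have : π (f x₁) - π (f x₂) ≤ -(ηw * ∑ l, |(H * B) j l|) := hfin
  linarith
end

section
/- (Adjoint correspondence between the L₁ and L∞ feasibility conditions.) Let A₁, …, A_k be real n×n matrices, B a real n×n_w matrix, C a real n_z×n matrix, and consider variables η_w, η_z ∈ ℝ, V ∈ ℝ^{n×m}, P ∈ ℝ^{m×2n_w}, and M₁, …, M_k ∈ ℝ^{m×m}. Then (η_w, η_z, V, P, M₁, …, M_k) satisfies the L₁ constraints for data (A₁,…,A_k, B, C), namely P ≥ 0 componentwise, [B, −B] = V P, η_w·1ᵀ = 1ᵀP, η_z > 0, and for each i: off-diagonal entries of M_i nonnegative, A_i V = V M_i, and −η_z·ẑ_V = 1ᵀM_i with ẑ_V the row vector of entries |C V_j|₁, if and only if (η_z, η_w, Vᵀ, Pᵀ, M₁ᵀ, …, M_kᵀ) satisfies the L∞ constraints for the adjoint data (A₁ᵀ, …, A_kᵀ,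 Cᵀ, Bᵀ), namely η_z > 0, and for each i: off-diagonal entries of M_iᵀ nonnegative, Vᵀ A_iᵀ = M_iᵀ Vᵀ, M_iᵀ 1 = −η_z · ŵ_{Vᵀ} with ŵ_{Vᵀ} the column vector whose j-th entry is |(Cᵀ)ᵀ((Vᵀ)^j)ᵀ|₁ = |C V_j|₁, together with Pᵀ ≥ 0, [Bᵀ; −Bᵀ] = Pᵀ Vᵀ, and η_w·1 = Pᵀ 1. -/
open Matrix

/-- The L₁ feasibility constraints (9b)–(9c) for data `(A₁,…,A_k, B, C)`:
`P ≥ 0`, `[B, −B] = VP`, `η_w 1ᵀ = 1ᵀP`, `η_z > 0`, and for each `i`: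
`offdiag(M_i) ≥ 0`, `A_i V = V M_i`, `−η_z ẑ_V = 1ᵀM_i`
(where `ẑ_V` has entries `|C V_j|₁`). -/
def L1Constraints {n nw nz m k : ℕ}
    (A : Fin k → Matrix (Fin n) (Fin n) ℝ)
    (B : Matrix (Fin n) (Fin nw) ℝ) (C : Matrix (Fin nz) (Fin n) ℝ)
    (ηw ηz : ℝ) (V : Matrix (Fin n) (Fin m) ℝ)
    (P : Matrix (Fin m) (Fin nw ⊕ Fin nw) ℝ)
    (M : Fin k → Matrix (Fin m) (Fin m) ℝ) : Prop :=
  (∀ i j, 0 ≤ P i j) ∧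
  Matrix.fromCols B (-B) = V * P ∧
  (∀ j, ηw = ∑ i, P i j) ∧
  0 < ηz ∧
  ∀ i, (∀ a b, a ≠ b → 0 ≤ M i a b) ∧
       A i * V = V * M i ∧
       (∀ j, -(ηz * ∑ l, |(C * V) l j|) = ∑ a, M i a j)

/-- The L∞ feasibility constraints (10b)–(10c) for data `(A₁,…,A_k, B, C)`:
`η_w > 0`, and for each `i`: `offdiag(M_i) ≥ 0`, `H A_i = M_i H`,
`M_i 1 = −η_w ŵ_H` (where `ŵ_H` has entries `|Bᵀ(H^j)ᵀ|₁`); together with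
`P ≥ 0`, `[C; −C] = PH`, `η_z 1 = P1`. -/
def LinftyConstraints {n nw nz m k : ℕ}
    (A : Fin k → Matrix (Fin n) (Fin n) ℝ)
    (B : Matrix (Fin n) (Fin nw) ℝ) (C : Matrix (Fin nz) (Fin n) ℝ)
    (ηw ηz : ℝ) (H : Matrix (Fin m) (Fin n) ℝ)
    (P : Matrix (Fin nz ⊕ Fin nz) (Fin m) ℝ)
    (M : Fin k → Matrix (Fin m) (Fin m) ℝ) : Prop :=
  0 < ηw ∧
  (∀ i, (∀ a b, a ≠ b → 0 ≤ M i a b) ∧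
        H * A i = M i * H ∧
        (∀ j, (∑ a, M i j a) = -(ηw * ∑ l, |(H * B) j l|))) ∧
  (∀ i j, 0 ≤ P i j) ∧
  Matrix.fromRows C (-C) = P * H ∧
  (∀ i, ηz = ∑ j, P i j)

/-- Adjoint correspondence: `(η_w, η_z, V, P, M₁, …, M_k)` is feasible for the
L₁ problem with data `(A₁,…,A_k, B, C)` iff `(η_z, η_w, Vᵀ, Pᵀ, M₁ᵀ, …, M_kᵀ)`
is feasible for the L∞ problem with the adjoint data `(A₁ᵀ,…,A_kᵀ, Cᵀ, Bᵀ)`. -/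
theorem L1_Linfty_adjoint {n nw nz m k : ℕ}
    (A : Fin k → Matrix (Fin n) (Fin n) ℝ)
    (B : Matrix (Fin n) (Fin nw) ℝ) (C : Matrix (Fin nz) (Fin n) ℝ)
    (ηw ηz : ℝ) (V : Matrix (Fin n) (Fin m) ℝ)
    (P : Matrix (Fin m) (Fin nw ⊕ Fin nw) ℝ)
    (M : Fin k → Matrix (Fin m) (Fin m) ℝ) :
    L1Constraints A B C ηw ηz V P M ↔
    LinftyConstraints (fun i => (A i)ᵀ) Cᵀ Bᵀ ηz ηw Vᵀ Pᵀ (fun i => (M i)ᵀ) := by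
  constructor
  · rintro ⟨hP, hB, hw, hz, hM⟩
    refine ⟨hz, fun i => ⟨fun a b hab => (hM i).1 b a hab.symm, ?_, fun j => ?_⟩,
      fun i j => hP j i, ?_, fun i => hw i⟩
    · have := congrArg Matrix.transpose (hM i).2.1
      simpa [Matrix.transpose_mul] using this
    · have := ((hM i).2.2 j).symm
      simpa [← Matrix.transpose_mul, Matrix.transpose_apply] using this
    · have := congrArg Matrix.transpose hB
      simpa [Matrix.transpose_fromCols, Matrix.transpose_mul] using this
  · rintro ⟨hz, hM, hP, hB, hw⟩
    refine ⟨fun i j => hP j i, ?_, fun j => hw j, hz, fun i => ⟨fun a b hab =>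
      (hM i).1 b a hab.symm, ?_, fun j => ?_⟩⟩
    · have := congrArg Matrix.transpose hB
      simpa [Matrix.transpose_fromRows, Matrix.transpose_mul] using this
    · have := congrArg Matrix.transpose (hM i).2.1
      simpa [Matrix.transpose_mul] using this
    · have := ((hM i).2.2 j).symm
      simpa [← Matrix.transpose_mul, Matrix.transpose_apply] using this
end
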